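/- arXiv:2101.09867 — 3 statements merged into one kernel-verified Lean document; each statement's English description precedes it below -/
import Mathlib

section
/- Let α ≥ 0, β ≥ 1 and j ≥ 1 be integers, let M ∈ C^{α+β}([0,∞), ℝ), and define ℳ_j(t,s) := ((-s)^j / j!) · M^{*j}(t-s) for t ≥ s. Then for all real t > s, |∂_t^α ∂_s^β ℳ_j(t,s)| ≤ (e^{t-s} / j!) · ( β (1+|s|) ‖M‖_{C^{α+β}([0,t-s])} )^j. -/
open Set MeasureTheory

/-- Convolution on `[0,∞)` (via signed interval integral): `(f*g)(t) = ∫_0^t f(t-s) g(s) ds`. -/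
noncomputable def conv (f g : ℝ → ℝ) : ℝ → ℝ :=
  fun t => ∫ s in (0:ℝ)..t, f (t - s) * g s

/-- `j`-fold convolution power of `M`, with the conventions `M^{*0} = 0` and `M^{*1} = M`. -/
noncomputable def convPow (M : ℝ → ℝ) : ℕ → ℝ → ℝ
  | 0 => fun _ => 0
  | 1 => M
  | (j+2) => conv M (convPow M (j+1))

/-- The norm `‖f‖_{C^k([0,t])} = ∑_{l=0}^k max_{0 ≤ τ ≤ t} |f^{(l)}(τ)|`,
derivatives taken within `[0,∞)`. -/
noncomputable def CkNorm (k : ℕ) (t : ℝ) (f : ℝ → ℝ) : ℝ :=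
  ∑ l ∈ Finset.range (k+1), ⨆ τ : Set.Icc (0:ℝ) t, |iteratedDerivWithin l f (Set.Ici 0) τ|

/-!
Near `s`, the function differentiated `β` times is `p(s') q(s')` with `p(s') = (-s')^j / j!` and
`q(s') = (M^{*j})^{(α)}(t - s')`, so Leibniz' rule applies once the derivatives of `M^{*j}` are
under control on `[0, t - s]`. Differentiating `conv g f` produces the boundary term `g 0 * f`, so
`(M^{*j})^{(k)}` is a sum of terms `M^{(i)}(0) (M^{*(j-1)})^{(k-1-i)}` plus `M^{(k)} * M^{*(j-1)}`,
and induction on `j` bounds it by `‖M‖^j e^x`, the convolution term costing `∫_0^x e^v dv < e^x`.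
Finally `∑_i C(β,i) j!/(j-i)! |s|^{j-i} ≤ (β (1 + |s|))^j`, since
`C(β,i) j!/(j-i)! ≤ β^j C(j,i)`.
-/

open Topology Function

section Triangle

variable {E : Type*} [NormedAddCommGroup E] [NormedSpace ℝ E]

def triangle (a b : ℝ) : Set (ℝ × ℝ) := {p | a ≤ p.2 ∧ p.2 ≤ p.1 ∧ p.1 ≤ b}

theorem isClosed_triangle (a b : ℝ) : IsClosed (triangle a b) :=
  (isClosed_le continuous_const continuous_snd).inter
    ((isClosed_le continuous_snd continuous_fst).inter
      (isClosed_le continuous_fst continuous_const))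

theorem isCompact_triangle (a b : ℝ) : IsCompact (triangle a b) :=
  (isCompact_Icc.prod (isCompact_Icc (a := a) (b := b))).of_isClosed_subset (isClosed_triangle a b)
    fun _ ⟨h1, h2, h3⟩ => ⟨⟨h1.trans h2, h3⟩, h1, h2.trans h3⟩

theorem integral_indicator_triangle_left (f : ℝ → ℝ → E) {a b : ℝ} (y : ℝ) :
    ∫ v, (triangle a b).indicator (uncurry f) (y, v) =
      (Icc a b).indicator (fun y => ∫ v in a..y, f y v) y := by
  by_cases hy : y ∈ Icc a b
  · rw [indicator_of_mem hy, intervalIntegral.integral_of_le hy.1, ← integral_Icc_eq_integral_Ioc,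
      ← integral_indicator measurableSet_Icc]
    congr 1 with v
    simp only [indicator_apply, triangle, mem_ofPred_eq, mem_Icc, uncurry_apply_pair]
    grind
  · rw [indicator_of_notMem hy, ← integral_zero ℝ E]
    congr 1 with v
    exact indicator_of_notMem (fun h => hy ⟨h.1.trans h.2.1, h.2.2⟩) _

theorem integral_indicator_triangle_right (f : ℝ → ℝ → E) {a b : ℝ} (v : ℝ) :
    ∫ y, (triangle a b).indicator (uncurry f) (y, v) =
      (Icc a b).indicator (fun v => ∫ y in v..b, f y v) v := by
  by_cases hv : v ∈ Icc a b
  · rw [indicator_of_mem hv, intervalIntegral.integral_of_le hv.2, ← integral_Icc_eq_integral_Ioc,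
      ← integral_indicator measurableSet_Icc]
    congr 1 with y
    simp only [indicator_apply, triangle, mem_ofPred_eq, mem_Icc, uncurry_apply_pair]
    grind
  · rw [indicator_of_notMem hv, ← integral_zero ℝ E]
    congr 1 with y
    exact indicator_of_notMem (fun h => hv ⟨h.1, h.2.1.trans h.2.2⟩) _

theorem integral_integral_triangle_swap {f : ℝ → ℝ → E} {a b : ℝ} (hab : a ≤ b)
    (hf : ContinuousOn (uncurry f) (triangle a b)) :
    ∫ y in a..b, ∫ v in a..y, f y v = ∫ v in a..b, ∫ y in v..b, f y v := by
  have hint : Integrable (uncurry fun y v => (triangle a b).indicator (uncurry f) (y, v))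
      (volume.prod volume) :=
    (hf.integrableOn_compact (isCompact_triangle a b)).integrable_indicator
      (isClosed_triangle a b).measurableSet
  have := integral_integral_swap hint
  simp only [integral_indicator_triangle_left, integral_indicator_triangle_right,
    integral_indicator measurableSet_Icc] at this
  rwa [intervalIntegral.integral_of_le hab, intervalIntegral.integral_of_le hab,
    ← integral_Icc_eq_integral_Ioc, ← integral_Icc_eq_integral_Ioc]

end Triangle

theorem ContinuousOn.intervalIntegrable_of_mem_Icc {u : ℝ → ℝ} {a b x : ℝ}
    (hu : ContinuousOn u (Icc a b)) (hx : x ∈ Icc a b) : IntervalIntegrable u volume a x :=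
  (hu.mono (Icc_subset_Icc le_rfl hx.2)).intervalIntegrable_of_Icc hx.1

theorem conv_apply_zero (u g : ℝ → ℝ) : conv u g 0 = 0 := intervalIntegral.integral_same

theorem conv_eqOn {X : ℝ} {u u' g g' : ℝ → ℝ} (hu : EqOn u u' (Icc 0 X))
    (hg : EqOn g g' (Icc 0 X)) : EqOn (conv u g) (conv u' g') (Icc 0 X) := by
  intro x hx
  refine intervalIntegral.integral_congr fun v hv => ?_
  rw [uIcc_of_le hx.1] at hv
  simp only [hu ⟨sub_nonneg.2 hv.2, by linarith [hv.1, hx.2]⟩, hg ⟨hv.1, hv.2.trans hx.2⟩]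

theorem continuous_conv {u g : ℝ → ℝ} (hu : Continuous u) (hg : Continuous g) :
    Continuous (conv u g) :=
  intervalIntegral.continuous_parametric_intervalIntegral_of_continuous (by fun_prop)
    continuous_id

theorem continuousOn_conv {X : ℝ} {u g : ℝ → ℝ} (hu : ContinuousOn u (Icc 0 X))
    (hg : ContinuousOn g (Icc 0 X)) : ContinuousOn (conv u g) (Icc 0 X) := by
  rcases lt_or_ge X 0 with hX | hX
  · simp [Icc_eq_empty_of_lt hX]
  let ext (w : ℝ → ℝ) : ℝ → ℝ := fun x => w (projIcc 0 X hX x)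
  have hext {w : ℝ → ℝ} (hw : ContinuousOn w (Icc 0 X)) : Continuous (ext w) :=
    hw.comp_continuous (by fun_prop) fun x => (projIcc 0 X hX x).2
  have heq (w : ℝ → ℝ) : EqOn w (ext w) (Icc 0 X) := fun x hx => by
    simp [ext, projIcc_of_mem hX hx]
  exact (continuous_conv (hext hu) (hext hg)).continuousOn.congr (conv_eqOn (heq u) (heq g))

theorem integral_conv {X x : ℝ} {u g : ℝ → ℝ} (hu : ContinuousOn u (Icc 0 X))
    (hg : ContinuousOn g (Icc 0 X)) (hx : x ∈ Icc 0 X) :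
    ∫ y in (0:ℝ)..x, conv u g y = ∫ v in (0:ℝ)..x, (∫ w in (0:ℝ)..(x - v), u w) * g v := by
  have hcont : ContinuousOn (uncurry fun y v => u (y - v) * g v) (triangle 0 x) :=
    (hu.comp (by fun_prop) fun p hp => ⟨sub_nonneg.2 hp.2.1, by linarith [hp.1, hp.2.2, hx.2]⟩).mul
      (hg.comp (by fun_prop) fun p hp => ⟨hp.1, hp.2.1.trans (hp.2.2.trans hx.2)⟩)
  simp only [conv]
  rw [integral_integral_triangle_swap hx.1 hcont]
  refine intervalIntegral.integral_congr fun v _ => ?_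
  simp only [intervalIntegral.integral_mul_const, intervalIntegral.integral_comp_sub_right,
    sub_self]

theorem conv_eq_mul_integral_add_integral_conv {X x : ℝ} {f u g : ℝ → ℝ}
    (hu : ContinuousOn u (Icc 0 X)) (hg : ContinuousOn g (Icc 0 X))
    (hf : ∀ w ∈ Icc 0 X, f w = f 0 + ∫ r in (0:ℝ)..w, u r) (hx : x ∈ Icc 0 X) :
    conv f g x = f 0 * (∫ v in (0:ℝ)..x, g v) + ∫ y in (0:ℝ)..x, conv u g y := by
  have hX : 0 ≤ X := hx.1.trans hx.2
  have hgx : ContinuousOn g (Icc 0 x) := hg.mono (Icc_subset_Icc le_rfl hx.2)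
  have hprim : ContinuousOn (fun v => ∫ w in (0:ℝ)..(x - v), u w) (Icc 0 x) := by
    refine (intervalIntegral.continuousOn_primitive_interval'
      (hu.intervalIntegrable_of_Icc hX) left_mem_uIcc).comp (by fun_prop) fun v hv => ?_
    rw [uIcc_of_le hX]
    exact ⟨sub_nonneg.2 hv.2, by linarith [hv.1, hx.2]⟩
  rw [integral_conv hu hg hx, ← intervalIntegral.integral_const_mul,
    ← intervalIntegral.integral_add (f := fun v => f 0 * g v)
      (g := fun v => (∫ w in (0:ℝ)..(x - v), u w) * g v)
      ((hgx.intervalIntegrable_of_Icc hx.1).const_mul _)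
      ((hprim.mul hgx).intervalIntegrable_of_Icc hx.1)]
  refine intervalIntegral.integral_congr fun v hv => ?_
  rw [uIcc_of_le hx.1] at hv
  simp only [hf (x - v) ⟨sub_nonneg.2 hv.2, by linarith [hv.1, hx.2]⟩]
  ring

theorem abs_iteratedDeriv_mul_le {f g : ℝ → ℝ} {n : ℕ} {x : ℝ} (hf : ContDiffAt ℝ n f x)
    (hg : ContDiffAt ℝ n g x) :
    |iteratedDeriv n (fun y => f y * g y) x| ≤ ∑ i ∈ Finset.range (n + 1),
      n.choose i * |iteratedDeriv i f x| * |iteratedDeriv (n - i) g x| := by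
  rw [iteratedDeriv_fun_mul hf hg]
  refine (Finset.abs_sum_le_sum_abs _ _).trans_eq (Finset.sum_congr rfl fun i _ => ?_)
  rw [abs_mul, abs_mul, Nat.abs_cast]

/-- `F l` is the `l`-th derivative of `F 0` on `[0, X]` for `l ≤ K`. The integrated form covers
the one-sided derivatives at `0` that `iteratedDerivWithin l M (Ici 0)` provides. -/
structure IsDerivSeq (X : ℝ) (K : ℕ) (F : ℕ → ℝ → ℝ) : Prop where
  continuousOn : ∀ l ≤ K, ContinuousOn (F l) (Icc 0 X)
  eq_add_integral : ∀ l < K, ∀ x ∈ Icc 0 X, F l x = F l 0 + ∫ y in (0:ℝ)..x, F (l + 1) y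

namespace IsDerivSeq

variable {X : ℝ} {K : ℕ} {F : ℕ → ℝ → ℝ}

theorem intervalIntegrable (hF : IsDerivSeq X K F) {l : ℕ} (hl : l ≤ K) {x : ℝ}
    (hx : x ∈ Icc 0 X) : IntervalIntegrable (F l) volume 0 x :=
  (hF.continuousOn l hl).intervalIntegrable_of_mem_Icc hx

theorem shift (hF : IsDerivSeq X K F) (a : ℕ) {K' : ℕ} (hK : a + K' ≤ K) :
    IsDerivSeq X K' fun l => F (a + l) where
  continuousOn l hl := hF.continuousOn (a + l) (by omega)
  eq_add_integral l hl := hF.eq_add_integral (a + l) (by omega)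

theorem hasDerivAt (hF : IsDerivSeq X K F) {l : ℕ} (hl : l < K) {x : ℝ} (hx : x ∈ Ioo 0 X) :
    HasDerivAt (F l) (F (l + 1) x) x := by
  have hcont := hF.continuousOn (l + 1) hl
  have hprim : HasDerivAt (fun w => F l 0 + ∫ y in (0:ℝ)..w, F (l + 1) y) (F (l + 1) x) x :=
    (intervalIntegral.integral_hasDerivAt_right (hF.intervalIntegrable hl (Ioo_subset_Icc_self hx))
      ((hcont.mono Ioo_subset_Icc_self).stronglyMeasurableAtFilter isOpen_Ioo x hx)
      (hcont.continuousAt (Icc_mem_nhds hx.1 hx.2))).const_add _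
  refine hprim.congr_of_eventuallyEq ?_
  filter_upwards [Ioo_mem_nhds hx.1 hx.2] with w hw
  exact hF.eq_add_integral l hl w (Ioo_subset_Icc_self hw)

theorem iteratedDeriv_eq (hF : IsDerivSeq X K F) {k : ℕ} (hk : k ≤ K) {x : ℝ}
    (hx : x ∈ Ioo 0 X) : iteratedDeriv k (F 0) x = F k x := by
  induction k generalizing x with
  | zero => rfl
  | succ k ih =>
    have hev : iteratedDeriv k (F 0) =ᶠ[𝓝 x] F k := by
      filter_upwards [Ioo_mem_nhds hx.1 hx.2] with w hw
      exact ih (by omega) hw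
    rw [iteratedDeriv_succ, hev.deriv_eq]
    exact (hF.hasDerivAt hk hx).deriv

theorem iteratedDeriv_comp_const_sub (hF : IsDerivSeq X K F) {k : ℕ} (hk : k ≤ K) {t y : ℝ}
    (hy : t - y ∈ Ioo 0 X) : iteratedDeriv k (fun y => F 0 (t - y)) y = (-1) ^ k * F k (t - y) := by
  simp only [_root_.iteratedDeriv_comp_const_sub, hF.iteratedDeriv_eq hk hy, smul_eq_mul]

theorem contDiffOn (hF : IsDerivSeq X K F) : ContDiffOn ℝ K (F 0) (Ioo 0 X) := by
  induction K generalizing F with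
  | zero => exact contDiffOn_zero.2 ((hF.continuousOn 0 le_rfl).mono Ioo_subset_Icc_self)
  | succ K ih =>
    rw [Nat.cast_add_one, contDiffOn_succ_iff_deriv_of_isOpen isOpen_Ioo]
    refine ⟨fun x hx => (hF.hasDerivAt K.succ_pos hx).differentiableAt.differentiableWithinAt,
      by simp, (ih (hF.shift 1 (by omega))).congr fun x hx => ?_⟩
    exact (hF.hasDerivAt K.succ_pos hx).deriv

theorem abs_iteratedDeriv_mul_comp_const_sub_le (hF : IsDerivSeq X K F) {p : ℝ → ℝ} {t s B : ℝ}
    (hp : ContDiffAt ℝ K p s) (hts : t - s ∈ Ioo 0 X) (hB : ∀ k ≤ K, |F k (t - s)| ≤ B) :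
    |iteratedDeriv K (fun y => p y * F 0 (t - y)) s| ≤
      ∑ i ∈ Finset.range (K + 1), K.choose i * |iteratedDeriv i p s| * B := by
  have hFt : ContDiffAt ℝ K (fun y => F 0 (t - y)) s :=
    (hF.contDiffOn.contDiffAt (Ioo_mem_nhds hts.1 hts.2)).comp s (by fun_prop)
  refine (abs_iteratedDeriv_mul_le hp hFt).trans (Finset.sum_le_sum fun i _ => ?_)
  rw [hF.iteratedDeriv_comp_const_sub (Nat.sub_le K i) hts, abs_mul, abs_pow, abs_neg, abs_one,
    one_pow, one_mul]
  gcongr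
  exact hB _ (Nat.sub_le K i)

end IsDerivSeq

theorem isDerivSeq_iteratedDerivWithin {M : ℝ → ℝ} {K : ℕ} (hM : ContDiffOn ℝ K M (Ici 0))
    (X : ℝ) : IsDerivSeq X K fun l => iteratedDerivWithin l M (Ici 0) := by
  have hcont : ∀ l ≤ K, ContinuousOn (iteratedDerivWithin l M (Ici 0)) (Icc 0 X) := fun l hl =>
    (hM.continuousOn_iteratedDerivWithin (by exact_mod_cast hl) (uniqueDiffOn_Ici 0)).mono
      fun _ hy => hy.1
  refine ⟨hcont, fun l hl x hx => ?_⟩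
  have hderiv : ∀ y ∈ Ioo 0 x, HasDerivAt (iteratedDerivWithin l M (Ici 0))
      (iteratedDerivWithin (l + 1) M (Ici 0) y) y := fun y hy => by
    rw [iteratedDerivWithin_succ]
    exact ((hM.differentiableOn_iteratedDerivWithin (by exact_mod_cast hl) (uniqueDiffOn_Ici 0))
      y hy.1.le).hasDerivWithinAt.hasDerivAt (Ici_mem_nhds hy.1)
  rw [intervalIntegral.integral_eq_sub_of_hasDerivAt_of_le hx.1
    ((hcont l hl.le).mono (Icc_subset_Icc le_rfl hx.2)) hderiv
    ((hcont (l + 1) hl).intervalIntegrable_of_mem_Icc hx)]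
  ring

/-- `(conv g f)' = g 0 * f + conv g' f`, iterated. -/
noncomputable def convDerivSeq (G F : ℕ → ℝ → ℝ) (l : ℕ) (x : ℝ) : ℝ :=
  ∑ i ∈ Finset.range l, G i 0 * F (l - 1 - i) x + conv (G l) (F 0) x

theorem integral_convDerivSeq_succ {X : ℝ} {K l : ℕ} {G F : ℕ → ℝ → ℝ} (hG : IsDerivSeq X K G)
    (hF : IsDerivSeq X K F) (hl : l < K) {x : ℝ} (hx : x ∈ Icc 0 X) :
    ∫ y in (0:ℝ)..x, convDerivSeq G F (l + 1) y =
      ∑ i ∈ Finset.range (l + 1), G i 0 * (∫ y in (0:ℝ)..x, F (l - i) y) +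
        ∫ y in (0:ℝ)..x, conv (G (l + 1)) (F 0) y := by
  have hFint : ∀ i ∈ Finset.range (l + 1), IntervalIntegrable (fun y => G i 0 * F (l - i) y)
      volume 0 x := fun i _ => (hF.intervalIntegrable (by omega) hx).const_mul _
  have hconv : IntervalIntegrable (conv (G (l + 1)) (F 0)) volume 0 x :=
    (continuousOn_conv (hG.continuousOn _ hl)
      (hF.continuousOn 0 (Nat.zero_le K))).intervalIntegrable_of_mem_Icc hx
  have hsum : IntervalIntegrable (fun y => ∑ i ∈ Finset.range (l + 1), G i 0 * F (l - i) y)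
      volume 0 x := by
    simpa only [Finset.sum_fn] using IntervalIntegrable.sum _ hFint
  simp only [convDerivSeq, Nat.add_sub_cancel]
  rw [intervalIntegral.integral_add hsum hconv, intervalIntegral.integral_finsetSum hFint]
  simp only [intervalIntegral.integral_const_mul]

theorem isDerivSeq_convDerivSeq {X : ℝ} {K : ℕ} {G F : ℕ → ℝ → ℝ}
    (hG : IsDerivSeq X K G) (hF : IsDerivSeq X K F) : IsDerivSeq X K (convDerivSeq G F) := by
  refine ⟨fun l hl => ?_, fun l hl x hx => ?_⟩
  · exact (continuousOn_finsetSum _ fun i _ => continuousOn_const.mul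
      (hF.continuousOn _ (by omega))).add
      (continuousOn_conv (hG.continuousOn l hl) (hF.continuousOn 0 (Nat.zero_le K)))
  have hFl : ∀ i ∈ Finset.range l,
      F (l - 1 - i) x = F (l - 1 - i) 0 + ∫ y in (0:ℝ)..x, F (l - i) y := fun i hi => by
    have := hF.eq_add_integral (l - 1 - i) (by omega) x hx
    rwa [show l - 1 - i + 1 = l - i by simp at hi; omega] at this
  have hGl := conv_eq_mul_integral_add_integral_conv (hG.continuousOn (l + 1) hl)
    (hF.continuousOn 0 (Nat.zero_le K)) (hG.eq_add_integral l hl) hx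
  have hsum : ∑ i ∈ Finset.range l, G i 0 * F (l - 1 - i) x =
      ∑ i ∈ Finset.range l, G i 0 * F (l - 1 - i) 0 +
        ∑ i ∈ Finset.range l, G i 0 * ∫ y in (0:ℝ)..x, F (l - i) y := by
    rw [← Finset.sum_add_distrib]
    exact Finset.sum_congr rfl fun i hi => by rw [hFl i hi, mul_add]
  rw [integral_convDerivSeq_succ hG hF hl hx, Finset.sum_range_succ, Nat.sub_self]
  simp only [convDerivSeq, conv_apply_zero, hsum, hGl]
  ring

theorem abs_conv_le_mul_exp_sub_one {A C x : ℝ} {f g : ℝ → ℝ} (hx : 0 ≤ x)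
    (hf : ∀ v ∈ Icc 0 x, |f v| ≤ A) (hg : ∀ v ∈ Icc 0 x, |g v| ≤ C * Real.exp v) :
    |conv f g x| ≤ A * C * (Real.exp x - 1) := by
  have hbound : ∀ v ∈ Ioc 0 x, ‖f (x - v) * g v‖ ≤ A * C * Real.exp v := fun v hv => by
    rw [Real.norm_eq_abs, abs_mul, mul_assoc]
    have hfv := hf (x - v) ⟨by linarith [hv.2], by linarith [hv.1]⟩
    exact mul_le_mul hfv (hg v (Ioc_subset_Icc_self hv)) (abs_nonneg _) ((abs_nonneg _).trans hfv)
  calc |conv f g x| ≤ ∫ v in (0:ℝ)..x, A * C * Real.exp v :=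
        intervalIntegral.norm_integral_le_of_norm_le hx (Filter.Eventually.of_forall hbound)
          (Continuous.intervalIntegrable (by fun_prop) _ _)
    _ = A * C * (Real.exp x - 1) := by
        rw [intervalIntegral.integral_const_mul, integral_exp, Real.exp_zero]

theorem abs_convDerivSeq_le {X C : ℝ} {K : ℕ} {G F : ℕ → ℝ → ℝ} {n : ℕ → ℝ}
    (hG : ∀ l ≤ K, ∀ x ∈ Icc 0 X, |G l x| ≤ n l)
    (hF : ∀ l ≤ K, ∀ x ∈ Icc 0 X, |F l x| ≤ C * Real.exp x) {k : ℕ} (hk : k ≤ K) {x : ℝ}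
    (hx : x ∈ Icc 0 X) :
    |convDerivSeq G F k x| ≤ (∑ i ∈ Finset.range (K + 1), n i) * C * Real.exp x := by
  have h0 : (0:ℝ) ∈ Icc 0 X := ⟨le_rfl, hx.1.trans hx.2⟩
  have hn : ∀ l ≤ K, 0 ≤ n l := fun l hl => (abs_nonneg _).trans (hG l hl 0 h0)
  have hC : 0 ≤ C := nonneg_of_mul_nonneg_left ((abs_nonneg _).trans (hF 0 (Nat.zero_le K) x hx))
    (Real.exp_pos x)
  have hsum : |∑ i ∈ Finset.range k, G i 0 * F (k - 1 - i) x|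
      ≤ ∑ i ∈ Finset.range k, n i * (C * Real.exp x) :=
    (Finset.abs_sum_le_sum_abs _ _).trans <| Finset.sum_le_sum fun i hi => by
      simp only [Finset.mem_range] at hi
      rw [abs_mul]
      exact mul_le_mul (hG i (by omega) 0 h0)
        (hF _ (by omega) x hx) (abs_nonneg _) (hn i (by omega))
  have hconv : |conv (G k) (F 0) x| ≤ n k * (C * Real.exp x) := by
    have := abs_conv_le_mul_exp_sub_one hx.1 (fun v hv => hG k hk v ⟨hv.1, hv.2.trans hx.2⟩)
      (fun v hv => hF 0 (Nat.zero_le K) v ⟨hv.1, hv.2.trans hx.2⟩)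
    nlinarith [mul_nonneg (hn k hk) hC]
  calc |convDerivSeq G F k x|
      ≤ ∑ i ∈ Finset.range (k + 1), n i * (C * Real.exp x) := by
        rw [Finset.sum_range_succ]
        exact (abs_add_le _ _).trans (add_le_add hsum hconv)
    _ ≤ ∑ i ∈ Finset.range (K + 1), n i * (C * Real.exp x) :=
        Finset.sum_le_sum_of_subset_of_nonneg (Finset.range_subset_range.2 (by omega))
          fun i hi _ => mul_nonneg (hn i (by simp at hi; omega)) (by positivity)
    _ = (∑ i ∈ Finset.range (K + 1), n i) * C * Real.exp x := by
        rw [← Finset.sum_mul]; ring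

theorem abs_le_iSup_abs_of_continuousOn {f : ℝ → ℝ} {a b x : ℝ} (hf : ContinuousOn f (Icc a b))
    (hx : x ∈ Icc a b) : |f x| ≤ ⨆ τ : Icc a b, |f τ| := by
  have : CompactSpace (Icc a b) := isCompact_iff_compactSpace.1 isCompact_Icc
  exact le_ciSup (isCompact_range hf.abs.domRestrict).bddAbove (⟨x, hx⟩ : Icc a b)

theorem abs_iteratedDerivWithin_le_iSup {M : ℝ → ℝ} {K l : ℕ} {X x : ℝ}
    (hM : ContDiffOn ℝ K M (Ici 0)) (hl : l ≤ K) (hx : x ∈ Icc 0 X) :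
    |iteratedDerivWithin l M (Ici 0) x| ≤ ⨆ τ : Icc 0 X, |iteratedDerivWithin l M (Ici 0) τ| :=
  abs_le_iSup_abs_of_continuousOn ((isDerivSeq_iteratedDerivWithin hM X).continuousOn l hl) hx

theorem abs_iteratedDerivWithin_le_CkNorm {M : ℝ → ℝ} {K l : ℕ} {X x : ℝ}
    (hM : ContDiffOn ℝ K M (Ici 0)) (hl : l ≤ K) (hx : x ∈ Icc 0 X) :
    |iteratedDerivWithin l M (Ici 0) x| ≤ CkNorm K X M :=
  (abs_iteratedDerivWithin_le_iSup hM hl hx).trans <| Finset.single_le_sum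
    (fun _ hi => (abs_nonneg _).trans <|
      abs_iteratedDerivWithin_le_iSup hM (Nat.lt_succ_iff.1 (Finset.mem_range.1 hi)) hx)
    (Finset.mem_range.2 (Nat.lt_succ_of_le hl))

theorem CkNorm_nonneg (K : ℕ) (X : ℝ) (M : ℝ → ℝ) : 0 ≤ CkNorm K X M :=
  Finset.sum_nonneg fun _ _ => Real.iSup_nonneg fun _ => abs_nonneg _

noncomputable def convPowDerivSeq (M : ℝ → ℝ) : ℕ → ℕ → ℝ → ℝ
  | 0 => fun _ _ => 0
  | 1 => fun l => iteratedDerivWithin l M (Ici 0)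
  | j + 2 => convDerivSeq (fun l => iteratedDerivWithin l M (Ici 0)) (convPowDerivSeq M (j + 1))

theorem convPowDerivSeq_zero (M : ℝ → ℝ) : ∀ j, convPowDerivSeq M j 0 = convPow M j
  | 0 => rfl
  | 1 => iteratedDerivWithin_zero
  | j + 2 => funext fun x => by
    simp only [convPowDerivSeq, convDerivSeq, Finset.range_zero, Finset.sum_empty, zero_add,
      convPow, convPowDerivSeq_zero M (j + 1), iteratedDerivWithin_zero]

theorem isDerivSeq_convPowDerivSeq {M : ℝ → ℝ} {K : ℕ} (hM : ContDiffOn ℝ K M (Ici 0))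
    (X : ℝ) : ∀ j, IsDerivSeq X K (convPowDerivSeq M j)
  | 0 => ⟨fun _ _ => continuousOn_const, fun _ _ _ _ => by simp [convPowDerivSeq]⟩
  | 1 => isDerivSeq_iteratedDerivWithin hM X
  | j + 2 => isDerivSeq_convDerivSeq (isDerivSeq_iteratedDerivWithin hM X)
      (isDerivSeq_convPowDerivSeq hM X (j + 1))

theorem abs_convPowDerivSeq_le {M : ℝ → ℝ} {K : ℕ} {X : ℝ} (hM : ContDiffOn ℝ K M (Ici 0)) :
    ∀ j, ∀ l ≤ K, ∀ x ∈ Icc 0 X, |convPowDerivSeq M j l x| ≤ CkNorm K X M ^ j * Real.exp x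
  | 0, _, _, x, _ => by simp [convPowDerivSeq, (Real.exp_pos x).le]
  | 1, _, hl, x, hx => by
    have hN := abs_iteratedDerivWithin_le_CkNorm hM hl hx
    have hN0 := CkNorm_nonneg K X M
    simp only [convPowDerivSeq, pow_one]
    nlinarith [Real.add_one_le_exp x, hx.1]
  | j + 2, _, hl, x, hx => by
    have hG : ∀ i ≤ K, ∀ y ∈ Icc 0 X, |iteratedDerivWithin i M (Ici 0) y| ≤
        ⨆ τ : Icc 0 X, |iteratedDerivWithin i M (Ici 0) τ| :=
      fun i hi y hy => abs_iteratedDerivWithin_le_iSup hM hi hy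
    have := abs_convDerivSeq_le hG (abs_convPowDerivSeq_le hM (j + 1)) hl hx
    exact this.trans_eq (by rw [CkNorm]; ring)
theorem abs_iteratedDeriv_neg_pow (j i : ℕ) (x : ℝ) :
    |iteratedDeriv i (fun y : ℝ => (-y) ^ j) x| = j.descFactorial i * |x| ^ (j - i) := by
  rw [iteratedDeriv_comp_neg i (fun y : ℝ => y ^ j), iteratedDeriv_pow, smul_eq_mul, abs_mul,
    abs_mul, abs_pow, abs_neg, abs_one, one_pow, one_mul, Nat.abs_cast, abs_pow, abs_neg]

theorem sum_choose_mul_descFactorial_le {β : ℕ} (hβ : 1 ≤ β) (j : ℕ) {r : ℝ} (hr : 0 ≤ r) :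
    ∑ i ∈ Finset.range (β + 1), (β.choose i : ℝ) * j.descFactorial i * r ^ (j - i) ≤
      (β * (1 + r)) ^ j := by
  -- `choose β i * descFactorial j i = descFactorial β i * choose j i ≤ β ^ j * choose j i`
  have hcoeff : ∀ i, (β.choose i * j.descFactorial i : ℝ) ≤ β ^ j * j.choose i := fun i => by
    rcases le_or_gt i j with hij | hji
    · have : β.choose i * j.descFactorial i = β.descFactorial i * j.choose i := by
        rw [Nat.descFactorial_eq_factorial_mul_choose, Nat.descFactorial_eq_factorial_mul_choose]
        ring
      exact_mod_cast this ▸ Nat.mul_le_mul_right _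
        ((Nat.descFactorial_le_pow β i).trans (Nat.pow_le_pow_right hβ hij))
    · rw [Nat.descFactorial_eq_zero_iff_lt.2 hji, Nat.cast_zero, mul_zero]
      positivity
  have hvanish : ∀ i ∈ Finset.range (β + j + 1), i ∉ Finset.range (j + 1) →
      (β : ℝ) ^ j * j.choose i * r ^ (j - i) = 0 := fun i _ hi => by
    rw [Nat.choose_eq_zero_of_lt (by simpa using hi)]
    simp
  calc ∑ i ∈ Finset.range (β + 1), (β.choose i : ℝ) * j.descFactorial i * r ^ (j - i)
      ≤ ∑ i ∈ Finset.range (β + 1), (β : ℝ) ^ j * j.choose i * r ^ (j - i) :=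
        Finset.sum_le_sum fun i _ => mul_le_mul_of_nonneg_right (hcoeff i) (by positivity)
    _ ≤ ∑ i ∈ Finset.range (β + j + 1), (β : ℝ) ^ j * j.choose i * r ^ (j - i) :=
        Finset.sum_le_sum_of_subset_of_nonneg (Finset.range_subset_range.2 (by omega))
          fun _ _ _ => by positivity
    _ = ∑ i ∈ Finset.range (j + 1), (β : ℝ) ^ j * j.choose i * r ^ (j - i) :=
        (Finset.sum_subset (Finset.range_subset_range.2 (by omega)) hvanish).symm
    _ = (β * (1 + r)) ^ j := by
        rw [mul_pow, add_pow, Finset.mul_sum]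
        exact Finset.sum_congr rfl fun i _ => by ring

theorem calM_mixed_deriv_bound_general
    (α β j : ℕ) (hβ : 1 ≤ β) (M : ℝ → ℝ)
    (hM : ContDiffOn ℝ (α + β) M (Set.Ici 0)) (t s : ℝ) (hts : s < t) :
    |iteratedDeriv β
        (fun s' => iteratedDeriv α
          (fun t' => ((-s') ^ j / (j.factorial : ℝ)) * convPow M j (t' - s')) t) s| ≤
      (Real.exp (t - s) / (j.factorial : ℝ)) *
        ((β : ℝ) * (1 + |s|) * CkNorm (α + β) (t - s) M) ^ j := by
  set X := t - s
  set N := CkNorm (α + β) X M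
  have hF : IsDerivSeq (X + 1) (α + β) (convPowDerivSeq M j) :=
    isDerivSeq_convPowDerivSeq (by exact_mod_cast hM) _ j
  have hmem : ∀ s' ∈ Ioo (s - 1) t, t - s' ∈ Ioo 0 (X + 1) :=
    fun s' hs' => ⟨by linarith [hs'.2], by linarith [hs'.1]⟩
  have hs : s ∈ Ioo (s - 1) t := ⟨by linarith, hts⟩
  set p : ℝ → ℝ := fun s' => (-s') ^ j / (j.factorial : ℝ)
  have hpq : (fun s' => iteratedDeriv α (fun t' => p s' * convPow M j (t' - s')) t)
      =ᶠ[𝓝 s] fun s' => p s' * convPowDerivSeq M j α (t - s') := by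
    filter_upwards [Ioo_mem_nhds hs.1 hs.2] with s' hs'
    simp only [iteratedDeriv_const_mul_field, iteratedDeriv_comp_sub_const,
      ← convPowDerivSeq_zero, hF.iteratedDeriv_eq (Nat.le_add_right α β) (hmem s' hs')]
  rw [hpq.iteratedDeriv_eq]
  calc _ ≤ ∑ i ∈ Finset.range (β + 1), β.choose i * |iteratedDeriv i p s| * (N ^ j * Real.exp X) :=
        (hF.shift α le_rfl).abs_iteratedDeriv_mul_comp_const_sub_le (by fun_prop) (hmem s hs)
          fun k hk => abs_convPowDerivSeq_le (by exact_mod_cast hM) j _ (by omega) X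
            ⟨(hmem s hs).1.le, le_rfl⟩
    _ = N ^ j * Real.exp X / j.factorial *
        ∑ i ∈ Finset.range (β + 1), (β.choose i : ℝ) * j.descFactorial i * |s| ^ (j - i) := by
        rw [Finset.mul_sum]
        refine Finset.sum_congr rfl fun i _ => ?_
        rw [iteratedDeriv_div_const, abs_div, abs_iteratedDeriv_neg_pow, Nat.abs_cast]
        ring
    _ ≤ N ^ j * Real.exp X / j.factorial * (β * (1 + |s|)) ^ j := by
        have := CkNorm_nonneg (α + β) X M
        gcongr
        exact sum_choose_mul_descFactorial_le hβ j (abs_nonneg s)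
    _ = _ := by rw [mul_pow _ N]; ring

/-- Let `α ≥ 0`, `β ≥ 1`, `j ≥ 1`, `M ∈ C^{α+β}([0,∞))`, and set
`ℳ_j(t,s) = ((-s)^j/j!) M^{*j}(t-s)`.  Then for all `t > s`,
`|∂_t^α ∂_s^β ℳ_j(t,s)| ≤ (e^{t-s}/j!) (β (1+|s|) ‖M‖_{C^{α+β}([0,t-s])})^j`,
where `∂_t^α ∂_s^β` means `α` derivatives in `t` followed by `β` derivatives in `s`. -/
theorem calM_mixed_deriv_bound
    (α β j : ℕ) (hβ : 1 ≤ β) (hj : 1 ≤ j) (M : ℝ → ℝ)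
    (hM : ContDiffOn ℝ (α + β) M (Set.Ici 0)) (t s : ℝ) (hts : s < t) :
    |iteratedDeriv β
        (fun s' => iteratedDeriv α
          (fun t' => ((-s') ^ j / (j.factorial : ℝ)) * convPow M j (t' - s')) t) s| ≤
      (Real.exp (t - s) / (j.factorial : ℝ)) *
        ((β : ℝ) * (1 + |s|) * CkNorm (α + β) (t - s) M) ^ j :=
  calM_mixed_deriv_bound_general α β j hβ M hM t s hts
end

section
/- Let M : [0,∞) → ℝ be continuous, let η ∈ ℝ, and let w_η be the unique C¹ solution on [0,∞) of w′(t) + η w(t) + ∫_0^t M(t-s) w(s) ds = 0 with w(0) = 1. Then for every t ≥ 0, w_η(t) = e^{-η t} + ∫_0^t K_M(t,s) e^{-η s} ds, where K_M(t,s) := ∑_{j=1}^∞ ((-s)^j / j!) M^{*j}(t-s). -/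
open Set MeasureTheory

/-- The flow kernel `K_M(t,s) = ∑_{j≥1} ((-s)^j / j!) M^{*j}(t-s)`. -/
noncomputable def KM (M : ℝ → ℝ) (t s : ℝ) : ℝ :=
  ∑' j : ℕ, ((-s) ^ j / (j.factorial : ℝ)) * convPow M j (t - s)

/-- `w` is a `C¹` solution on `[0,∞)` of the memory ODE
`w′(t) + η w(t) + ∫_0^t M(t-s) w(s) ds = 0` with `w(0) = 1`
(the derivative at `0` being taken within `[0,∞)`). -/
noncomputable def IsMemorySol (M : ℝ → ℝ) (η : ℝ) (w : ℝ → ℝ) : Prop :=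
  ContDiffOn ℝ 1 w (Set.Ici 0) ∧ w 0 = 1 ∧
    ∀ t : ℝ, 0 ≤ t →
      derivWithin w (Set.Ici 0) t + η * w t + (∫ s in (0:ℝ)..t, M (t - s) * w s) = 0

/-! Multiplying the equation by `e^{ηt}` and integrating turns it into the Volterra equation
`w = u - N * w` with `u(t) = e^{-ηt}` and `N = u * M`. Iterating it gives the Neumann series
`w - u = ∑_{j ≥ 1} (-1)^j N^{*j} * u`, whose remainder `N^{*(n+1)} * w` is `O((Ct)^n / n!)`.
Convolution on `[0, t]` is commutative and associative, so `N^{*j} * u = M^{*j} * u^{*(j+1)}`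
with `u^{*(j+1)}(s) = s^j / j! · e^{-ηs}`: the `j`-th term of the series is
`∫_0^t ((-s)^j / j!) M^{*j}(t-s) e^{-ηs} ds`, and dominated convergence sums these terms to
the kernel integral. -/

open Filter Topology Interval

lemma conv_comm (f g : ℝ → ℝ) : conv f g = conv g f := by
  funext t
  have h := intervalIntegral.integral_comp_sub_left (a := 0) (b := t) (fun s => g (t - s) * f s) t
  simp only [sub_sub_cancel, sub_self, sub_zero] at h
  rw [conv, conv, ← h]
  exact intervalIntegral.integral_congr fun s _ => mul_comm _ _

lemma conv_congr_right (f : ℝ → ℝ) {g₁ g₂ : ℝ → ℝ} {t : ℝ} (ht : 0 ≤ t)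
    (h : EqOn g₁ g₂ (Icc 0 t)) : conv f g₁ t = conv f g₂ t :=
  intervalIntegral.integral_congr fun s hs => by
    rw [uIcc_of_le ht] at hs
    simp only [h hs]

lemma conv_congr_left {f₁ f₂ : ℝ → ℝ} (g : ℝ → ℝ) {t : ℝ} (ht : 0 ≤ t)
    (h : EqOn f₁ f₂ (Icc 0 t)) : conv f₁ g t = conv f₂ g t := by
  rw [conv_comm, conv_congr_right g ht h, conv_comm]

lemma Continuous.conv {f g : ℝ → ℝ} (hf : Continuous f) (hg : Continuous g) :
    Continuous (conv f g) :=
  intervalIntegral.continuous_parametric_intervalIntegral_of_continuous (by fun_prop)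
    continuous_id

lemma conv_sub_right {f g₁ g₂ : ℝ → ℝ} (hf : Continuous f) (hg₁ : Continuous g₁)
    (hg₂ : Continuous g₂) (t : ℝ) : conv f (g₁ - g₂) t = conv f g₁ t - conv f g₂ t := by
  simp only [conv, Pi.sub_apply, mul_sub]
  exact intervalIntegral.integral_sub (by apply Continuous.intervalIntegrable; fun_prop)
    (by apply Continuous.intervalIntegrable; fun_prop)

lemma abs_conv_le {f g : ℝ → ℝ} {t A B : ℝ} (ht : 0 ≤ t) (hf : ∀ τ ∈ Icc 0 t, |f τ| ≤ A)
    (hg : ∀ τ ∈ Icc 0 t, |g τ| ≤ B) : |conv f g t| ≤ A * B * t := by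
  have hbound : ∀ s ∈ Ι 0 t, ‖f (t - s) * g s‖ ≤ A * B := by
    intro s hs
    rw [uIoc_of_le ht] at hs
    rw [Real.norm_eq_abs, abs_mul]
    exact mul_le_mul (hf _ ⟨by linarith [hs.2], by linarith [hs.1]⟩) (hg s (Ioc_subset_Icc_self hs))
      (abs_nonneg _) ((abs_nonneg _).trans (hf t ⟨ht, le_rfl⟩))
  simpa [conv, abs_of_nonneg ht] using intervalIntegral.norm_integral_le_of_norm_le_const hbound

lemma integral_integral_triangle_swap_s11 {F : ℝ → ℝ → ℝ} (hF : Continuous (Function.uncurry F))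
    {t : ℝ} (ht : 0 ≤ t) :
    ∫ σ in 0..t, ∫ s in 0..σ, F σ s = ∫ s in 0..t, ∫ σ in s..t, F σ s := by
  set G : ℝ → ℝ → ℝ := fun σ s => if s < σ then F σ s else 0 with hG
  have hG_uncurry :
      Function.uncurry G = {p : ℝ × ℝ | p.2 < p.1}.indicator (Function.uncurry F) := by
    ext ⟨σ, s⟩; simp [hG, Set.indicator_apply]
  have hG_int : IntegrableOn (Function.uncurry G) (Ι 0 t ×ˢ Ι 0 t) := by
    rw [hG_uncurry]
    refine IntegrableOn.indicator ?_ (measurableSet_lt measurable_snd measurable_fst)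
    exact (hF.continuousOn.integrableOn_compact (isCompact_uIcc.prod isCompact_uIcc)).mono_set
      (prod_mono uIoc_subset_uIcc uIoc_subset_uIcc)
  have h_inner : ∀ σ ∈ uIcc 0 t, ∫ s in 0..σ, F σ s = ∫ s in 0..t, G σ s := by
    intro σ hσ
    rw [uIcc_of_le ht] at hσ
    have : G σ = (Iio σ).indicator (F σ) := by ext s; simp [hG, Set.indicator_apply]
    rw [this, intervalIntegral.integral_of_le hσ.1, intervalIntegral.integral_of_le ht,
      setIntegral_indicator measurableSet_Iio, integral_Ioc_eq_integral_Ioo]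
    congr 2
    ext s
    simp only [mem_inter_iff, mem_Ioc, mem_Iio, mem_Ioo]
    constructor
    · exact fun h => ⟨⟨h.1, by linarith [hσ.2]⟩, h.2⟩
    · exact fun h => ⟨h.1.1, h.2⟩
  have h_outer : ∀ s ∈ uIcc 0 t, ∫ σ in s..t, F σ s = ∫ σ in 0..t, G σ s := by
    intro s hs
    rw [uIcc_of_le ht] at hs
    have : (fun σ => G σ s) = (Ioi s).indicator (fun σ => F σ s) := by
      ext σ; simp [hG, Set.indicator_apply]
    rw [this, intervalIntegral.integral_of_le hs.2, intervalIntegral.integral_of_le ht,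
      setIntegral_indicator measurableSet_Ioi, Ioc_inter_Ioi, max_eq_right hs.1]
  rw [intervalIntegral.integral_congr h_inner, intervalIntegral.integral_congr h_outer]
  exact intervalIntegral_intervalIntegral_swap hG_int

lemma conv_apply_sub_eq_integral (f g : ℝ → ℝ) (s t : ℝ) :
    conv f g (t - s) = ∫ σ in s..t, f (t - σ) * g (σ - s) := by
  have h := intervalIntegral.integral_comp_add_right (a := 0) (b := t - s)
    (fun σ => f (t - σ) * g (σ - s)) s
  simp only [zero_add, sub_add_cancel, add_sub_cancel_right, sub_add_eq_sub_sub] at h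
  rw [conv, ← h]
  simp only [sub_right_comm]

lemma conv_assoc {f g h : ℝ → ℝ} (hf : Continuous f) (hg : Continuous g) (hh : Continuous h)
    {t : ℝ} (ht : 0 ≤ t) : conv f (conv g h) t = conv (conv f g) h t := by
  calc conv f (conv g h) t
      = ∫ σ in 0..t, ∫ s in 0..σ, f (t - σ) * (g (σ - s) * h s) := by
        simp only [conv, intervalIntegral.integral_const_mul]
    _ = ∫ s in 0..t, ∫ σ in s..t, f (t - σ) * (g (σ - s) * h s) :=
        integral_integral_triangle_swap_s11 (by fun_prop) ht
    _ = conv (conv f g) h t := by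
        show _ = ∫ s in 0..t, conv f g (t - s) * h s
        simp only [conv_apply_sub_eq_integral, ← intervalIntegral.integral_mul_const, mul_assoc]

lemma Continuous.convPow {M : ℝ → ℝ} (hM : Continuous M) : ∀ j, Continuous (convPow M j)
  | 0 => continuous_const
  | 1 => hM
  | j + 2 => hM.conv (hM.convPow (j + 1))

lemma convPow_congr {M₁ M₂ : ℝ → ℝ} (h : EqOn M₁ M₂ (Ici 0)) :
    ∀ j, EqOn (convPow M₁ j) (convPow M₂ j) (Ici 0)
  | 0 => fun _ _ => rfl
  | 1 => h
  | j + 2 => fun τ (hτ : 0 ≤ τ) => by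
      rw [convPow, convPow, conv_congr_left _ hτ (h.mono Icc_subset_Ici_self),
        conv_congr_right _ hτ ((convPow_congr h (j + 1)).mono Icc_subset_Ici_self)]

lemma abs_convPow_succ_le {M : ℝ → ℝ} {C T : ℝ} (hM : Continuous M)
    (hC : ∀ τ ∈ Icc 0 T, |M τ| ≤ C) (j : ℕ) :
    ∀ τ ∈ Icc 0 T, |convPow M (j + 1) τ| ≤ C ^ (j + 1) * τ ^ j / j.factorial := by
  induction j with
  | zero => simpa [convPow] using hC
  | succ j ih =>
    intro τ hτ
    have hMj := hM.convPow (j + 1)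
    have hC0 : 0 ≤ C := (abs_nonneg _).trans (hC 0 ⟨le_rfl, hτ.1.trans hτ.2⟩)
    calc |convPow M (j + 2) τ| ≤ ∫ s in 0..τ, |M (τ - s) * convPow M (j + 1) s| :=
          intervalIntegral.abs_integral_le_integral_abs hτ.1
      _ ≤ ∫ s in 0..τ, C * (C ^ (j + 1) * s ^ j / j.factorial) := by
          refine intervalIntegral.integral_mono_on hτ.1
            (by apply Continuous.intervalIntegrable; fun_prop)
            (by apply Continuous.intervalIntegrable; fun_prop) fun s hs => ?_
          rw [abs_mul]
          exact mul_le_mul (hC _ ⟨by linarith [hs.2], by linarith [hs.1, hτ.2]⟩)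
            (ih s ⟨hs.1, hs.2.trans hτ.2⟩) (abs_nonneg _) hC0
      _ = C ^ (j + 2) * τ ^ (j + 1) / (j + 1).factorial := by
          simp only [mul_div_assoc', ← mul_assoc, ← pow_succ', intervalIntegral.integral_div,
            intervalIntegral.integral_const_mul, integral_pow, Nat.factorial_succ]
          push_cast
          field_simp
          ring

lemma convPow_exp_succ (η : ℝ) (k : ℕ) {s : ℝ} (hs : 0 ≤ s) :
    convPow (fun x => Real.exp (-η * x)) (k + 1) s = s ^ k / k.factorial * Real.exp (-η * s) := by
  induction k generalizing s with
  | zero => simp [convPow]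
  | succ k ih =>
    calc convPow (fun x => Real.exp (-η * x)) (k + 2) s
        = ∫ r in 0..s, Real.exp (-η * s) / k.factorial * r ^ k := by
          refine intervalIntegral.integral_congr fun r hr => ?_
          rw [uIcc_of_le hs] at hr
          have hexp : Real.exp (-η * (s - r)) * Real.exp (-η * r) = Real.exp (-η * s) := by
            rw [← Real.exp_add]; ring_nf
          rw [ih hr.1]
          linear_combination r ^ k / k.factorial * hexp
      _ = s ^ (k + 1) / (k + 1).factorial * Real.exp (-η * s) := by
          rw [intervalIntegral.integral_const_mul, integral_pow, Nat.factorial_succ]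
          push_cast
          field_simp
          ring

lemma convPow_conv {f g : ℝ → ℝ} (hf : Continuous f) (hg : Continuous g) (k : ℕ) :
    EqOn (convPow (conv f g) (k + 1)) (conv (convPow f (k + 1)) (convPow g (k + 1))) (Ici 0) := by
  induction k with
  | zero => exact fun _ _ => rfl
  | succ k ih =>
    intro τ (hτ : 0 ≤ τ)
    have hF := hf.convPow (k + 1)
    have hG := hg.convPow (k + 1)
    calc convPow (conv f g) (k + 2) τ
        = conv (conv f g) (conv (convPow f (k + 1)) (convPow g (k + 1))) τ :=
          conv_congr_right _ hτ (ih.mono Icc_subset_Ici_self)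
      _ = conv f (conv (conv g (convPow f (k + 1))) (convPow g (k + 1))) τ := by
          rw [← conv_assoc hf hg (hF.conv hG) hτ]
          exact conv_congr_right _ hτ fun σ hσ => conv_assoc hg hF hG hσ.1
      _ = conv f (conv (convPow f (k + 1)) (conv g (convPow g (k + 1)))) τ := by
          rw [conv_comm g]
          exact conv_congr_right _ hτ fun σ hσ => (conv_assoc hF hg hG hσ.1).symm
      _ = conv (convPow f (k + 2)) (convPow g (k + 2)) τ :=
          conv_assoc hf hF (hg.conv hG) hτ

lemma abs_convPow_le_pow {M : ℝ → ℝ} {C T : ℝ} (hM : Continuous M) (hT : 1 ≤ T)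
    (hC : ∀ τ ∈ Icc 0 T, |M τ| ≤ C) : ∀ j, ∀ τ ∈ Icc 0 T, |convPow M j τ| ≤ (C * T) ^ j
  | 0 => fun _ _ => by simp [convPow]
  | j + 1 => fun τ hτ => by
    have hC0 : 0 ≤ C := (abs_nonneg _).trans (hC 0 ⟨le_rfl, by linarith⟩)
    calc |convPow M (j + 1) τ| ≤ C ^ (j + 1) * τ ^ j / j.factorial :=
          abs_convPow_succ_le hM hC j τ hτ
      _ ≤ C ^ (j + 1) * τ ^ j :=
          div_le_self (by have := hτ.1; positivity) (by exact_mod_cast j.factorial_pos)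
      _ ≤ C ^ (j + 1) * T ^ (j + 1) := by
          gcongr
          exact (pow_le_pow_left₀ hτ.1 hτ.2 j).trans (pow_le_pow_right₀ hT j.le_succ)
      _ = (C * T) ^ (j + 1) := (mul_pow _ _ _).symm

section Volterra

variable {N u w : ℝ → ℝ}

lemma conv_convPow_eq_of_volterra (hN : Continuous N) (hu : Continuous u) (hw : Continuous w)
    (hvol : ∀ τ, 0 ≤ τ → w τ = u τ - conv N w τ) (n : ℕ) {t : ℝ} (ht : 0 ≤ t) :
    conv (convPow N (n + 1)) w t = conv (convPow N (n + 1)) u t - conv (convPow N (n + 2)) w t := by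
  have hNn := hN.convPow (n + 1)
  rw [conv_congr_right _ ht (g₂ := u - conv N w) fun τ hτ => hvol τ hτ.1,
    conv_sub_right hNn hu (hN.conv hw), conv_assoc hNn hN hw ht, conv_comm _ N]
  rfl

lemma eq_partial_sum_add_of_volterra (hN : Continuous N) (hu : Continuous u) (hw : Continuous w)
    (hvol : ∀ τ, 0 ≤ τ → w τ = u τ - conv N w τ) {t : ℝ} (ht : 0 ≤ t) (n : ℕ) :
    w t = u t + ∑ j ∈ Finset.range (n + 1), (-1) ^ j * conv (convPow N j) u t
      + (-1) ^ (n + 1) * conv (convPow N (n + 1)) w t := by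
  induction n with
  | zero => simpa [convPow, conv, sub_eq_add_neg] using hvol t ht
  | succ n ih =>
    rw [Finset.sum_range_succ _ (n + 1), ih, conv_convPow_eq_of_volterra hN hu hw hvol n ht]
    ring

lemma tendsto_conv_convPow_succ_zero (hN : Continuous N) (hw : Continuous w) {t : ℝ} (ht : 0 ≤ t) :
    Tendsto (fun n => conv (convPow N (n + 1)) w t) atTop (𝓝 0) := by
  obtain ⟨D, hD⟩ := (isCompact_Icc (a := 0) (b := t)).exists_bound_of_continuousOn hN.continuousOn
  obtain ⟨W, hW⟩ := (isCompact_Icc (a := 0) (b := t)).exists_bound_of_continuousOn hw.continuousOn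
  simp only [Real.norm_eq_abs] at hD hW
  have hD0 : 0 ≤ D := (abs_nonneg _).trans (hD 0 ⟨le_rfl, ht⟩)
  have hbound (n : ℕ) : |conv (convPow N (n + 1)) w t| ≤ D * W * t * ((D * t) ^ n / n.factorial) :=
    calc |conv (convPow N (n + 1)) w t| ≤ D ^ (n + 1) * t ^ n / n.factorial * W * t :=
          abs_conv_le ht (fun τ hτ => (abs_convPow_succ_le hN hD n τ hτ).trans <|
            div_le_div_of_nonneg_right (mul_le_mul_of_nonneg_left
              (pow_le_pow_left₀ hτ.1 hτ.2 n) (pow_nonneg hD0 _)) (Nat.cast_nonneg _)) hW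
      _ = D * W * t * ((D * t) ^ n / n.factorial) := by ring
  have hlim := (FloorSemiring.tendsto_pow_div_factorial_atTop (D * t)).const_mul (D * W * t)
  rw [mul_zero] at hlim
  exact squeeze_zero_norm hbound hlim

lemma tendsto_partial_sum_of_volterra (hN : Continuous N) (hu : Continuous u)
    (hw : Continuous w) (hvol : ∀ τ, 0 ≤ τ → w τ = u τ - conv N w τ) {t : ℝ} (ht : 0 ≤ t) :
    Tendsto (fun n => ∑ j ∈ Finset.range n, (-1) ^ j * conv (convPow N j) u t) atTop
      (𝓝 (w t - u t)) := by
  rw [← tendsto_add_atTop_iff_nat 1]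
  have hrem : Tendsto (fun n => (-1) ^ (n + 1) * conv (convPow N (n + 1)) w t) atTop (𝓝 0) :=
    squeeze_zero_norm (fun n => by simp) (tendsto_zero_iff_norm_tendsto_zero.mp
      (tendsto_conv_convPow_succ_zero hN hw ht))
  have hlim := (tendsto_const_nhds (x := w t - u t)).sub hrem
  rw [sub_zero] at hlim
  refine hlim.congr fun n => ?_
  linarith [eq_partial_sum_add_of_volterra hN hu hw hvol ht n]

end Volterra

noncomputable def KMTerm (M : ℝ → ℝ) (t s : ℝ) (j : ℕ) : ℝ :=
  (-s) ^ j / j.factorial * convPow M j (t - s)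

lemma KM_eq_tsum_KMTerm (M : ℝ → ℝ) (t s : ℝ) : KM M t s = ∑' j, KMTerm M t s j := rfl

lemma KM_congr {M₁ M₂ : ℝ → ℝ} (h : EqOn M₁ M₂ (Ici 0)) {t s : ℝ} (hst : s ≤ t) :
    KM M₁ t s = KM M₂ t s := by
  simp only [KM_eq_tsum_KMTerm, KMTerm, convPow_congr h _ (sub_nonneg.mpr hst)]

lemma abs_KMTerm_le {M : ℝ → ℝ} {C T t s : ℝ} (hM : Continuous M) (hT : 1 ≤ T) (htT : t ≤ T)
    (hC : ∀ τ ∈ Icc 0 T, |M τ| ≤ C) (hs : s ∈ Icc 0 t) (j : ℕ) :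
    |KMTerm M t s j| ≤ (C * T ^ 2) ^ j / j.factorial := by
  have hMj := abs_convPow_le_pow hM hT hC j (t - s) ⟨by linarith [hs.2], by linarith [hs.1]⟩
  calc |KMTerm M t s j| = s ^ j / j.factorial * |convPow M j (t - s)| := by
        rw [KMTerm, abs_mul, abs_div, abs_pow, abs_neg, abs_of_nonneg hs.1, Nat.abs_cast]
    _ ≤ T ^ j / j.factorial * (C * T) ^ j := by
        gcongr
        exacts [hs.1, hs.2.trans htT]
    _ = (C * T ^ 2) ^ j / j.factorial := by ring

lemma hasSum_integral_KMTerm_mul {M g : ℝ → ℝ} (hM : Continuous M) (hg : Continuous g)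
    {t : ℝ} (ht : 0 ≤ t) :
    HasSum (fun j => ∫ s in 0..t, KMTerm M t s j * g s) (∫ s in 0..t, KM M t s * g s) := by
  set T := max t 1
  obtain ⟨C, hC⟩ := (isCompact_Icc (a := 0) (b := T)).exists_bound_of_continuousOn hM.continuousOn
  obtain ⟨G, hG⟩ := (isCompact_Icc (a := 0) (b := t)).exists_bound_of_continuousOn hg.continuousOn
  simp only [Real.norm_eq_abs] at hC hG
  have hC0 : 0 ≤ C := (abs_nonneg _).trans (hC 0 ⟨le_rfl, zero_le_one.trans (le_max_right _ _)⟩)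
  have hterm (j : ℕ) {s : ℝ} (hs : s ∈ Icc 0 t) :
      |KMTerm M t s j| ≤ (C * T ^ 2) ^ j / j.factorial :=
    abs_KMTerm_le hM (le_max_right _ _) (le_max_left _ _) hC hs j
  have hbound (j : ℕ) (s : ℝ) (hs : s ∈ Ι 0 t) :
      ‖KMTerm M t s j * g s‖ ≤ (C * T ^ 2) ^ j / j.factorial * G := by
    rw [uIoc_of_le ht] at hs
    rw [Real.norm_eq_abs, abs_mul]
    exact mul_le_mul (hterm j (Ioc_subset_Icc_self hs)) (hG s (Ioc_subset_Icc_self hs))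
      (abs_nonneg _) (by positivity)
  have hsummable := (Real.summable_pow_div_factorial (C * T ^ 2)).mul_right G
  refine intervalIntegral.hasSum_integral_of_dominated_convergence
    (fun j _ => (C * T ^ 2) ^ j / j.factorial * G) (fun j => ?_)
    (fun j => ae_of_all _ (hbound j)) (ae_of_all _ fun _ _ => hsummable)
    intervalIntegrable_const (ae_of_all _ fun s hs => ?_)
  · have hMj := hM.convPow j
    have : Continuous fun s => KMTerm M t s j := by unfold KMTerm; fun_prop
    exact (this.mul hg).aestronglyMeasurable
  · rw [uIoc_of_le ht] at hs
    refine HasSum.mul_right _ (Summable.hasSum ?_)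
    exact (Real.summable_pow_div_factorial _).of_norm_bounded fun j =>
      hterm j (Ioc_subset_Icc_self hs)

lemma integral_KMTerm_mul_exp {M : ℝ → ℝ} (hM : Continuous M) (η : ℝ) {t : ℝ} (ht : 0 ≤ t)
    (j : ℕ) :
    ∫ s in 0..t, KMTerm M t s j * Real.exp (-η * s)
      = (-1) ^ j * conv (convPow (conv (fun x => Real.exp (-η * x)) M) j)
          (fun x => Real.exp (-η * x)) t := by
  set u : ℝ → ℝ := fun x => Real.exp (-η * x)
  have hu : Continuous u := by fun_prop
  cases j with
  | zero => simp [KMTerm, convPow, conv]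
  | succ k =>
    have hMk := hM.convPow (k + 1)
    have huk := hu.convPow (k + 1)
    calc ∫ s in 0..t, KMTerm M t s (k + 1) * u s
        = (-1) ^ (k + 1) *
            conv (convPow M (k + 1)) (fun s => s ^ (k + 1) / (k + 1).factorial * u s) t := by
          rw [conv, ← intervalIntegral.integral_const_mul]
          refine intervalIntegral.integral_congr fun s _ => ?_
          simp only [KMTerm, neg_pow s]
          ring
      _ = (-1) ^ (k + 1) * conv (convPow M (k + 1)) (conv (convPow u (k + 1)) u) t := by
          rw [conv_congr_right _ ht fun s hs => (convPow_exp_succ η (k + 1) hs.1).symm,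
            conv_comm _ u]
          rfl
      _ = (-1) ^ (k + 1) * conv (convPow (conv u M) (k + 1)) u t := by
          rw [conv_assoc hMk huk hu ht, conv_comm (convPow M _)]
          exact congrArg _
            (conv_congr_left _ ht ((convPow_conv hu hM k).mono Icc_subset_Ici_self).symm)

lemma exists_continuous_eqOn_Ici {X : Type*} [TopologicalSpace X] {f : ℝ → X} {a : ℝ}
    (hf : ContinuousOn f (Ici a)) : ∃ g : ℝ → X, Continuous g ∧ EqOn f g (Ici a) :=
  ⟨fun x => f (max x a), hf.comp_continuous (by fun_prop) fun x => le_max_right x a,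
    fun x (hx : a ≤ x) => by simp only [max_eq_left hx]⟩

namespace IsMemorySol

variable {M w : ℝ → ℝ} {η : ℝ}

lemma congr {M' w' : ℝ → ℝ} (h : IsMemorySol M η w) (hM : EqOn M M' (Ici 0))
    (hw : EqOn w w' (Ici 0)) : IsMemorySol M' η w' := by
  obtain ⟨hdiff, hinit, hode⟩ := h
  refine ⟨hdiff.congr fun x hx => (hw hx).symm, (hw (le_refl (0 : ℝ))).symm.trans hinit,
    fun t ht => ?_⟩
  have hconv : conv M w t = conv M' w' t := by
    rw [conv_congr_left _ ht (hM.mono Icc_subset_Ici_self),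
      conv_congr_right _ ht (hw.mono Icc_subset_Ici_self)]
  have hode_t := hode t ht
  change _ + _ + conv M w t = 0 at hode_t
  rw [derivWithin_congr hw.symm (hw ht).symm, ← hw ht]
  rwa [hconv] at hode_t

lemma hasDerivAt_exp_mul (h : IsMemorySol M η w) {σ : ℝ} (hσ : 0 < σ) :
    HasDerivAt (fun x => Real.exp (η * x) * w x) (-(Real.exp (η * σ) * conv M w σ)) σ := by
  have hw : HasDerivAt w (derivWithin w (Ici 0) σ) σ :=
    ((h.1.differentiableOn one_ne_zero σ hσ.le).hasDerivWithinAt).hasDerivAt (Ici_mem_nhds hσ)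
  have hexp : HasDerivAt (fun x => Real.exp (η * x)) (Real.exp (η * σ) * η) σ := by
    simpa using ((hasDerivAt_id σ).const_mul η).exp
  have hode := h.2.2 σ hσ.le
  change _ + _ + conv M w σ = 0 at hode
  exact (hexp.mul hw).congr_deriv (by linear_combination Real.exp (η * σ) * hode)

lemma integral_exp_mul_conv (hM : Continuous M) (hw : Continuous w) (h : IsMemorySol M η w)
    {τ : ℝ} (hτ : 0 ≤ τ) :
    ∫ σ in 0..τ, Real.exp (η * σ) * conv M w σ = 1 - Real.exp (η * τ) * w τ := by
  have hFTC := intervalIntegral.integral_eq_sub_of_hasDeriv_right_of_le hτ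
    (f := fun x => Real.exp (η * x) * w x) (by fun_prop)
    (fun σ hσ => (h.hasDerivAt_exp_mul hσ.1).hasDerivWithinAt)
    (by have := hM.conv hw; apply Continuous.intervalIntegrable; fun_prop)
  simp only [intervalIntegral.integral_neg, mul_zero, Real.exp_zero, h.2.1] at hFTC
  linarith

lemma eq_exp_sub_conv (hM : Continuous M) (hw : Continuous w) (h : IsMemorySol M η w)
    {τ : ℝ} (hτ : 0 ≤ τ) :
    w τ = Real.exp (-η * τ) - conv (conv (fun x => Real.exp (-η * x)) M) w τ := by
  have hexp (a b : ℝ) : Real.exp (-η * (a - b)) = Real.exp (-η * a) * Real.exp (η * b) := by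
    rw [← Real.exp_add]; ring_nf
  rw [← conv_assoc (by fun_prop) hM hw hτ]
  calc w τ = Real.exp (-η * τ) - Real.exp (-η * τ) * (1 - Real.exp (η * τ) * w τ) := by
        rw [mul_sub, ← mul_assoc, ← hexp, sub_self, mul_zero, Real.exp_zero]; ring
    _ = _ := by
        rw [← h.integral_exp_mul_conv hM hw hτ, ← intervalIntegral.integral_const_mul]
        simp only [conv, hexp, mul_assoc]

end IsMemorySol

/-- For `M` continuous on `[0,∞)` and `η ∈ ℝ`, the `C¹` solution of the
memory ODE satisfies `w_η(t) = e^{-ηt} + ∫_0^t K_M(t,s) e^{-ηs} ds` for all `t ≥ 0`. -/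
theorem memory_ode_kernel_representation
    (M : ℝ → ℝ) (hM : ContinuousOn M (Set.Ici 0)) (η : ℝ)
    (w : ℝ → ℝ) (hw : IsMemorySol M η w) :
    ∀ t : ℝ, 0 ≤ t →
      w t = Real.exp (-η * t) + ∫ s in (0:ℝ)..t, KM M t s * Real.exp (-η * s) := by
  intro t ht
  obtain ⟨Mc, hMc, hMMc⟩ := exists_continuous_eqOn_Ici hM
  obtain ⟨wc, hwc, hwwc⟩ := exists_continuous_eqOn_Ici hw.1.continuousOn
  set u : ℝ → ℝ := fun x => Real.exp (-η * x)
  have hu : Continuous u := by fun_prop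
  have hvolterra (τ : ℝ) (hτ : 0 ≤ τ) : wc τ = u τ - conv (conv u Mc) wc τ :=
    (hw.congr hMMc hwwc).eq_exp_sub_conv hMc hwc hτ
  have hneumann := tendsto_partial_sum_of_volterra (hu.conv hMc) hu hwc hvolterra ht
  have hkernel := (hasSum_integral_KMTerm_mul hMc hu ht).tendsto_sum_nat
  simp only [u, integral_KMTerm_mul_exp hMc η ht] at hkernel
  have hKM : ∫ s in 0..t, KM M t s * u s = ∫ s in 0..t, KM Mc t s * u s :=
    intervalIntegral.integral_congr fun s hs => by
      rw [uIcc_of_le ht] at hs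
      rw [KM_congr hMMc hs.2]
  rw [hwwc ht, hKM, ← tendsto_nhds_unique hneumann hkernel]
  ring
end

section
/- Let M ∈ C^∞([0,∞), ℝ), let N ≥ 2 be an integer, and define R_N(t,τ) := ∫_0^t τ e^{-τ s} ∂_s^N K_M(t,s) ds for t ≥ 0, τ ≥ 0. Then for every t ≥ 0 and every τ > 0, |R_N(t,τ)| ≤ e^t · { exp[ N (1+t) ( ∑_{j=0}^N max_{0 ≤ s ≤ t} |M^{(j)}(s)| ) ] − 1 }. -/
open Set MeasureTheory

/-- The remainder kernel `R_N(t,τ) = ∫_0^t τ e^{-τs} ∂_s^N K_M(t,s) ds`,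
the `s`-derivative of `K_M(t,·)` being taken within its domain `(-∞, t]`. -/
noncomputable def RNrem (M : ℝ → ℝ) (N : ℕ) (t τ : ℝ) : ℝ :=
  ∫ s in (0:ℝ)..t,
    τ * Real.exp (-τ * s) * iteratedDerivWithin N (fun s' => KM M t s') (Set.Iic t) s

/-!
On `(0, t)` the series `K_M(t, ·)` may be differentiated term by term. Differentiating
`M^{*(j+1)} = M * M^{*j}` with `(f * g)' = f(0) g + f' * g` gives `|(M^{*j})^{(l)}| ≤ A^j e^t` on
`[0, t]` for `l ≤ N`, where `A = ∑_{i ≤ N} max_{[0,t]} |M^{(i)}|`. By the Leibniz rule and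
`C(m, k) · j!/(j-k)! ≤ N^k C(j, k)`, the `N`-th derivative of the `j`-th term is then at most
`e^t (N(1+t)A)^j / j!`; the `j = 0` term vanishes, so `|∂_s^N K_M(t, s)| ≤ e^t (e^{N(1+t)A} - 1)`,
and `τ e^{-τ s}` has integral at most `1` over `[0, t]`.
-/

open Filter Topology

section Convolution

variable {f f' g g' f₁ g₁ : ℝ → ℝ}

theorem conv_eqOn_of_eqOn (hf : EqOn f f₁ (Ici 0)) (hg : EqOn g g₁ (Ici 0)) :
    EqOn (conv f g) (conv f₁ g₁) (Ici 0) := by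
  intro u (hu : 0 ≤ u)
  refine intervalIntegral.integral_congr fun s hs => ?_
  rw [uIcc_of_le hu] at hs
  simp only [hf (show 0 ≤ u - s by linarith [hs.2]), hg hs.1]

theorem conv_eq_integral_unitInterval (f g : ℝ → ℝ) (u : ℝ) :
    conv f g u = ∫ σ in (0:ℝ)..1, u * (f (u - u * σ) * g (u * σ)) := by
  rcases eq_or_ne u 0 with rfl | hu
  · simp [conv]
  rw [intervalIntegral.integral_const_mul, intervalIntegral.integral_comp_mul_left
    (fun s => f (u - s) * g s) hu, mul_zero, mul_one, smul_eq_mul, mul_inv_cancel_left₀ hu]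
  rfl

def extendIci (f : ℝ → ℝ) (x : ℝ) : ℝ := f (max 0 x)

theorem continuous_extendIci (hf : ContinuousOn f (Ici 0)) : Continuous (extendIci f) :=
  hf.comp_continuous (continuous_const.max continuous_id) fun x => le_max_left 0 x

theorem extendIci_eqOn (f : ℝ → ℝ) : EqOn (extendIci f) f (Ici 0) := fun x (hx : 0 ≤ x) => by
  simp [extendIci, hx]

theorem continuousOn_conv_s15 (hf : ContinuousOn f (Ici 0)) (hg : ContinuousOn g (Ici 0)) :
    ContinuousOn (conv f g) (Ici 0) := by
  have hf₁ := continuous_extendIci hf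
  have hg₁ := continuous_extendIci hg
  have hc : Continuous (conv (extendIci f) (extendIci g)) :=
    intervalIntegral.continuous_parametric_intervalIntegral_of_continuous
      (f := fun u s => extendIci f (u - s) * extendIci g s) (by fun_prop) continuous_id
  exact hc.continuousOn.congr fun u hu =>
    conv_eqOn_of_eqOn (extendIci_eqOn f).symm (extendIci_eqOn g).symm hu

theorem integral_unitInterval_deriv_eq (hf : Continuous f) (hf' : Continuous f')
    (hg : Continuous g) (hg' : Continuous g')
    (hfd : ∀ x, 0 < x → HasDerivAt f (f' x) x) (hgd : ∀ x, 0 < x → HasDerivAt g (g' x) x)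
    {u : ℝ} (hu : 0 < u) :
    ∫ σ in (0:ℝ)..1, (f (u - u * σ) * g (u * σ) +
        u * (f' (u - u * σ) * (1 - σ) * g (u * σ) + f (u - u * σ) * (g' (u * σ) * σ))) =
      f 0 * g u + conv f' g u := by
  -- The integrand is `∂_σ [σ f(u - uσ) g(uσ)] + u f'(u - uσ) g(uσ)`.
  set φ : ℝ → ℝ := fun σ => σ * (f (u - u * σ) * g (u * σ))
  set φ' : ℝ → ℝ := fun σ => f (u - u * σ) * g (u * σ) + σ * (f' (u - u * σ) * -u * g (u * σ) +
    f (u - u * σ) * (g' (u * σ) * u))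
  have hφ' : ∀ σ ∈ Ioo (0:ℝ) 1, HasDerivAt φ (φ' σ) σ := by
    intro σ hσ
    have h₁ : HasDerivAt (fun σ => f (u - u * σ)) (f' (u - u * σ) * -u) σ :=
      (hfd _ (by nlinarith [hσ.2])).comp σ ((hasDerivAt_const_mul u).const_sub u)
    have h₂ : HasDerivAt (fun σ => g (u * σ)) (g' (u * σ) * u) σ :=
      (hgd _ (mul_pos hu hσ.1)).comp σ (hasDerivAt_const_mul u)
    exact ((hasDerivAt_id' σ).fun_mul (h₁.fun_mul h₂)).congr_deriv (by simp only [φ']; ring)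
  have hφ'c : Continuous φ' := by fun_prop
  have hrest : Continuous fun σ => u * (f' (u - u * σ) * g (u * σ)) := by fun_prop
  have hFTC : ∫ σ in (0:ℝ)..1, φ' σ = f 0 * g u := by
    rw [intervalIntegral.integral_eq_sub_of_hasDeriv_right_of_le zero_le_one
      (by fun_prop) (fun σ hσ => (hφ' σ hσ).hasDerivWithinAt) (hφ'c.intervalIntegrable 0 1)]
    simp [φ]
  rw [conv_eq_integral_unitInterval f' g u, ← hFTC, ← intervalIntegral.integral_add
    (hφ'c.intervalIntegrable 0 1) (hrest.intervalIntegrable 0 1)]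
  congr 1
  ext σ
  simp only [φ']
  ring

theorem hasDerivAt_conv_of_continuous (hf : Continuous f) (hf' : Continuous f')
    (hg : Continuous g) (hg' : Continuous g')
    (hfd : ∀ x, 0 < x → HasDerivAt f (f' x) x) (hgd : ∀ x, 0 < x → HasDerivAt g (g' x) x)
    {u : ℝ} (hu : 0 < u) :
    HasDerivAt (conv f g) (f 0 * g u + conv f' g u) u := by
  set F : ℝ → ℝ → ℝ := fun x σ => x * (f (x - x * σ) * g (x * σ))
  set F' : ℝ → ℝ → ℝ := fun x σ => f (x - x * σ) * g (x * σ) +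
    x * (f' (x - x * σ) * (1 - σ) * g (x * σ) + f (x - x * σ) * (g' (x * σ) * σ))
  have hFc : Continuous (Function.uncurry F) := by fun_prop
  have hF'c : Continuous (Function.uncurry F') := by fun_prop
  have hF_deriv : ∀ σ ∈ Ioo (0:ℝ) 1, ∀ x, 0 < x → HasDerivAt (F · σ) (F' x σ) x := by
    intro σ hσ x hx
    have h₁ : HasDerivAt (fun x => f (x - x * σ)) (f' (x - x * σ) * (1 - σ)) x :=
      (hfd _ (by nlinarith [hσ.2])).comp x ((hasDerivAt_id' x).sub (hasDerivAt_mul_const σ))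
    have h₂ : HasDerivAt (fun x => g (x * σ)) (g' (x * σ) * σ) x :=
      (hgd _ (mul_pos hx hσ.1)).comp x (hasDerivAt_mul_const σ)
    exact ((hasDerivAt_id' x).fun_mul (h₁.fun_mul h₂)).congr_deriv (by simp only [F']; ring)
  obtain ⟨K, hK⟩ := ((isCompact_closedBall u (u / 2)).prod (isCompact_Icc (a := (0:ℝ)) (b := 1)))
    |>.exists_bound_of_continuousOn hF'c.continuousOn
  have hball : Metric.ball u (u / 2) ⊆ Ioi 0 := fun x hx => by
    rw [Metric.mem_ball, Real.dist_eq, abs_lt] at hx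
    exact show 0 < x by linarith
  obtain ⟨-, hderiv⟩ := intervalIntegral.hasDerivAt_integral_of_dominated_loc_of_deriv_le
    (F := F) (F' := F') (bound := fun _ => K) (Metric.ball_mem_nhds u (half_pos hu))
    (Eventually.of_forall fun x => (hFc.comp (Continuous.prodMk_right x)).aestronglyMeasurable)
    ((hFc.comp (Continuous.prodMk_right u)).intervalIntegrable 0 1)
    (hF'c.comp (Continuous.prodMk_right u)).aestronglyMeasurable
    (ae_of_all _ fun σ hσ x hx => hK (x, σ) ⟨Metric.ball_subset_closedBall hx,
      uIcc_of_le (zero_le_one (α := ℝ)) ▸ uIoc_subset_uIcc hσ⟩)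
    intervalIntegrable_const
    (by
      filter_upwards [Measure.ae_ne volume (1:ℝ)] with σ hσ1 hσ x hx
      rw [uIoc_of_le zero_le_one] at hσ
      exact hF_deriv σ ⟨hσ.1, lt_of_le_of_ne hσ.2 hσ1⟩ x (hball hx))
  rw [← integral_unitInterval_deriv_eq hf hf' hg hg' hfd hgd hu]
  exact hderiv.congr_of_eventuallyEq
    (Eventually.of_forall fun x => conv_eq_integral_unitInterval f g x)

theorem hasDerivAt_extendIci (hfd : ∀ x, 0 < x → HasDerivAt f (f' x) x) {x : ℝ} (hx : 0 < x) :
    HasDerivAt (extendIci f) (extendIci f' x) x := by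
  have hfx : extendIci f =ᶠ[𝓝 x] f :=
    Filter.mem_of_superset (Ici_mem_nhds hx) (extendIci_eqOn f)
  rw [extendIci_eqOn f' hx.le]
  exact (hfd x hx).congr_of_eventuallyEq hfx

theorem hasDerivAt_conv (hf : ContinuousOn f (Ici 0)) (hf' : ContinuousOn f' (Ici 0))
    (hg : ContinuousOn g (Ici 0)) (hg' : ContinuousOn g' (Ici 0))
    (hfd : ∀ x, 0 < x → HasDerivAt f (f' x) x) (hgd : ∀ x, 0 < x → HasDerivAt g (g' x) x)
    {u : ℝ} (hu : 0 < u) :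
    HasDerivAt (conv f g) (f 0 * g u + conv f' g u) u := by
  have h := hasDerivAt_conv_of_continuous (continuous_extendIci hf) (continuous_extendIci hf')
    (continuous_extendIci hg) (continuous_extendIci hg') (fun x => hasDerivAt_extendIci hfd)
    (fun x => hasDerivAt_extendIci hgd) hu
  have hconv : EqOn (conv (extendIci f) (extendIci g)) (conv f g) (Ici 0) :=
    conv_eqOn_of_eqOn (extendIci_eqOn f) (extendIci_eqOn g)
  rwa [extendIci_eqOn f self_mem_Ici, extendIci_eqOn g hu.le,
    conv_eqOn_of_eqOn (extendIci_eqOn f') (extendIci_eqOn g) hu.le,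
    hconv.eventuallyEq_of_mem (Ici_mem_nhds hu) |>.hasDerivAt_iff] at h

end Convolution

theorem abs_conv_le_s15 {f g : ℝ → ℝ} {C D u : ℝ} {j : ℕ} (hu : 0 ≤ u)
    (hf : ∀ x ∈ Icc 0 u, |f x| ≤ C) (hg : ∀ x ∈ Icc 0 u, |g x| ≤ D * x ^ j / j.factorial) :
    |conv f g u| ≤ C * D * u ^ (j + 1) / (j + 1).factorial := by
  have hC : 0 ≤ C := (abs_nonneg _).trans (hf u ⟨hu, le_rfl⟩)
  have hbound : ∀ s ∈ Ioc 0 u, ‖f (u - s) * g s‖ ≤ C * D / j.factorial * s ^ j := by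
    intro s hs
    rw [Real.norm_eq_abs, abs_mul, show C * D / j.factorial * s ^ j = C * (D * s ^ j / j.factorial)
      by ring]
    exact mul_le_mul (hf _ ⟨by linarith [hs.2], by linarith [hs.1]⟩)
      (hg s ⟨hs.1.le, hs.2⟩) (abs_nonneg _) hC
  calc |conv f g u| ≤ ∫ s in (0:ℝ)..u, C * D / j.factorial * s ^ j :=
        intervalIntegral.norm_integral_le_of_norm_le hu (ae_of_all _ hbound)
          ((continuous_const.mul (continuous_pow j)).intervalIntegrable 0 u)
    _ = C * D * u ^ (j + 1) / (j + 1).factorial := by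
        rw [intervalIntegral.integral_const_mul, integral_pow, Nat.factorial_succ]
        push_cast
        field_simp
        ring

theorem ContDiffOn.hasDerivAt_iteratedDerivWithin {f : ℝ → ℝ} {s : Set ℝ}
    (hf : ContDiffOn ℝ (⊤ : ℕ∞) f s) (hs : UniqueDiffOn ℝ s) (l : ℕ) {x : ℝ} (hx : s ∈ 𝓝 x) :
    HasDerivAt (iteratedDerivWithin l f s) (iteratedDerivWithin (l + 1) f s x) x := by
  rw [iteratedDerivWithin_succ, derivWithin_of_mem_nhds hx]
  exact ((hf.differentiableOn_iteratedDerivWithin (by exact_mod_cast ENat.natCast_lt_top l) hs) x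
    (mem_of_mem_nhds hx) |>.differentiableAt hx).hasDerivAt

section ConvolutionPowers

variable {M : ℝ → ℝ}

theorem continuousOn_convPow (hM : ContinuousOn M (Ici 0)) :
    ∀ j, ContinuousOn (convPow M j) (Ici 0)
  | 0 => continuousOn_const
  | 1 => hM
  | j + 2 => continuousOn_conv_s15 hM (continuousOn_convPow hM (j + 1))

theorem abs_convPow_le {T C : ℝ} (hM : ∀ x ∈ Icc 0 T, |M x| ≤ C) :
    ∀ j : ℕ, ∀ u ∈ Icc 0 T, |convPow M (j + 1) u| ≤ C ^ (j + 1) * u ^ j / j.factorial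
  | 0, u, hu => by simpa [convPow] using hM u hu
  | j + 1, u, hu => by
    have hsub : Icc 0 u ⊆ Icc 0 T := Icc_subset_Icc_right hu.2
    have h := abs_conv_le_s15 hu.1 (fun x hx => hM x (hsub hx))
      (fun x hx => abs_convPow_le hM j x (hsub hx))
    rwa [← pow_succ'] at h

/-- `convPowDeriv M j l` is the `l`-th derivative of `M^{*j}` on `(0, ∞)`, obtained by
differentiating `M^{*(j+2)} = M * M^{*(j+1)}` `l` times with `(f * g)' = f(0) g + f' * g`. -/
noncomputable def convPowDeriv (M : ℝ → ℝ) : ℕ → ℕ → ℝ → ℝ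
  | 0, _, _ => 0
  | 1, l, u => iteratedDerivWithin l M (Ici 0) u
  | j + 2, l, u =>
      ∑ i ∈ Finset.range l, iteratedDerivWithin i M (Ici 0) 0 * convPowDeriv M (j + 1) (l - 1 - i) u
        + conv (iteratedDerivWithin l M (Ici 0)) (convPow M (j + 1)) u

theorem convPowDeriv_zero_right (M : ℝ → ℝ) : ∀ j, convPowDeriv M j 0 = convPow M j
  | 0 => rfl
  | 1 => funext fun u => by simp [convPowDeriv, convPow]
  | j + 2 => funext fun u => by simp [convPowDeriv, convPow]

theorem continuousOn_convPowDeriv (hM : ContDiffOn ℝ (⊤ : ℕ∞) M (Ici 0)) :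
    ∀ j l, ContinuousOn (convPowDeriv M j l) (Ici 0)
  | 0, _ => continuousOn_const
  | 1, l => hM.continuousOn_iteratedDerivWithin (by exact_mod_cast le_top) (uniqueDiffOn_Ici 0)
  | j + 2, l => by
    refine (continuousOn_finsetSum _ fun i _ =>
      continuousOn_const.mul (continuousOn_convPowDeriv hM (j + 1) (l - 1 - i))).add ?_
    exact continuousOn_conv_s15
      (hM.continuousOn_iteratedDerivWithin (by exact_mod_cast le_top) (uniqueDiffOn_Ici 0))
      (continuousOn_convPow hM.continuousOn (j + 1))

theorem hasDerivAt_convPowDeriv (hM : ContDiffOn ℝ (⊤ : ℕ∞) M (Ici 0)) :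
    ∀ j l x, 0 < x → HasDerivAt (convPowDeriv M j l) (convPowDeriv M j (l + 1) x) x
  | 0, _, x, _ => hasDerivAt_const x 0
  | 1, l, x, hx => hM.hasDerivAt_iteratedDerivWithin (uniqueDiffOn_Ici 0) l (Ici_mem_nhds hx)
  | j + 2, l, x, hx => by
    have hMl : ∀ l, ContinuousOn (iteratedDerivWithin l M (Ici 0)) (Ici 0) := fun l =>
      hM.continuousOn_iteratedDerivWithin (by exact_mod_cast le_top) (uniqueDiffOn_Ici 0)
    have hsum := HasDerivAt.fun_sum (u := Finset.range l) fun i _ =>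
      (hasDerivAt_convPowDeriv hM (j + 1) (l - 1 - i) x hx).const_mul
        (iteratedDerivWithin i M (Ici 0) 0)
    have hconv := hasDerivAt_conv (hMl l) (hMl (l + 1))
      (continuousOn_convPow hM.continuousOn (j + 1))
      (continuousOn_convPowDeriv hM (j + 1) 1)
      (fun y hy => hM.hasDerivAt_iteratedDerivWithin (uniqueDiffOn_Ici 0) l (Ici_mem_nhds hy))
      (fun y hy => by
        rw [← convPowDeriv_zero_right]; exact hasDerivAt_convPowDeriv hM (j + 1) 0 y hy) hx
    refine (hsum.fun_add hconv).congr_deriv ?_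
    simp only [convPowDeriv, Finset.sum_range_succ, Nat.add_sub_cancel, Nat.sub_self,
      convPowDeriv_zero_right]
    rw [Finset.sum_congr rfl fun i hi => by
      rw [show l - 1 - i + 1 = l - i by have := Finset.mem_range.1 hi; omega]]
    ring

theorem abs_conv_iteratedDerivWithin_convPow_le {T : ℝ} {S : ℕ → ℝ}
    (hS : ∀ l, ∀ x ∈ Icc 0 T, |iteratedDerivWithin l M (Ici 0) x| ≤ S l) (l j : ℕ) {u : ℝ}
    (hu : u ∈ Icc 0 T) :
    |conv (iteratedDerivWithin l M (Ici 0)) (convPow M (j + 1)) u| ≤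
      S l * S 0 ^ (j + 1) * Real.exp T := by
  have hsub : Icc 0 u ⊆ Icc 0 T := Icc_subset_Icc_right hu.2
  have hS0 : 0 ≤ S 0 := (abs_nonneg _).trans (hS 0 u hu)
  refine (abs_conv_le_s15 hu.1 (fun x hx => hS l x (hsub hx)) fun x hx =>
    abs_convPow_le (fun y hy => by simpa using hS 0 y hy) j x (hsub hx)).trans ?_
  rw [mul_div_assoc]
  exact mul_le_mul_of_nonneg_left
    ((Real.pow_div_factorial_le_exp _ hu.1 _).trans (Real.exp_le_exp.2 hu.2))
    (mul_nonneg ((abs_nonneg _).trans (hS l u hu)) (pow_nonneg hS0 _))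

theorem abs_convPowDeriv_le {T : ℝ} {S : ℕ → ℝ} (hT : 0 ≤ T)
    (hS : ∀ l, ∀ x ∈ Icc 0 T, |iteratedDerivWithin l M (Ici 0) x| ≤ S l) (j l : ℕ) :
    ∀ u ∈ Icc 0 T,
      |convPowDeriv M j l u| ≤ (∑ i ∈ Finset.range (l + 1), S i) ^ j * Real.exp T := by
  have hS0 : ∀ i, 0 ≤ S i := fun i => (abs_nonneg _).trans (hS i 0 ⟨le_rfl, hT⟩)
  induction j generalizing l with
  | zero => simp [convPowDeriv, Real.exp_nonneg]
  | succ j ih =>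
    intro u hu
    rcases j with _ | j
    · calc |convPowDeriv M 1 l u| ≤ S l := hS l u hu
        _ ≤ ∑ i ∈ Finset.range (l + 1), S i :=
            Finset.single_le_sum (fun i _ => hS0 i) (Finset.self_mem_range_succ l)
        _ ≤ _ := by
            rw [pow_one]
            exact le_mul_of_one_le_right (Finset.sum_nonneg fun i _ => hS0 i)
              (Real.one_le_exp hT)
    have hB : ∀ k ≤ l, ∑ i ∈ Finset.range (k + 1), S i ≤ ∑ i ∈ Finset.range (l + 1), S i :=
      fun k hk => Finset.sum_le_sum_of_subset_of_nonneg (Finset.range_subset_range.2 (by omega))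
        fun i _ _ => hS0 i
    set B := ∑ i ∈ Finset.range (l + 1), S i
    have hsum : |∑ i ∈ Finset.range l, iteratedDerivWithin i M (Ici 0) 0 *
        convPowDeriv M (j + 1) (l - 1 - i) u| ≤
        (∑ i ∈ Finset.range l, S i) * (B ^ (j + 1) * Real.exp T) := by
      refine (Finset.abs_sum_le_sum_abs _ _).trans ?_
      rw [Finset.sum_mul]
      refine Finset.sum_le_sum fun i hi => ?_
      rw [abs_mul]
      refine mul_le_mul (hS i 0 ⟨le_rfl, hT⟩) ?_ (abs_nonneg _) (hS0 i)
      refine (ih (l - 1 - i) u hu).trans ?_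
      gcongr
      · exact Finset.sum_nonneg fun i _ => hS0 i
      · exact hB _ (by omega)
    have hconv : |conv (iteratedDerivWithin l M (Ici 0)) (convPow M (j + 1)) u| ≤
        S l * (B ^ (j + 1) * Real.exp T) := by
      rw [← mul_assoc]
      refine (abs_conv_iteratedDerivWithin_convPow_le hS l j hu).trans ?_
      gcongr
      · exact hS0 l
      · exact hS0 0
      · simpa using hB 0 (Nat.zero_le l)
    calc |convPowDeriv M (j + 2) l u|
        ≤ (∑ i ∈ Finset.range l, S i) * (B ^ (j + 1) * Real.exp T) +
            S l * (B ^ (j + 1) * Real.exp T) := (abs_add_le _ _).trans (add_le_add hsum hconv)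
      _ = B ^ (j + 2) * Real.exp T := by rw [← add_mul, ← Finset.sum_range_succ]; ring

end ConvolutionPowers

theorem abs_iteratedDeriv_neg_pow_div_factorial (j k : ℕ) (s : ℝ) :
    |iteratedDeriv k (fun s : ℝ => (-s) ^ j / j.factorial) s| =
      j.descFactorial k * |s| ^ (j - k) / j.factorial := by
  rw [iteratedDeriv_comp_neg k (fun x : ℝ => x ^ j / j.factorial) s, iteratedDeriv_div_const,
    iteratedDeriv_pow]
  simp [abs_mul, abs_div]

theorem hasDerivAt_iteratedDeriv_neg_pow_div_factorial (j k : ℕ) (s : ℝ) :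
    HasDerivAt (iteratedDeriv k fun s : ℝ => (-s) ^ j / j.factorial)
      (iteratedDeriv (k + 1) (fun s : ℝ => (-s) ^ j / j.factorial) s) s := by
  rw [iteratedDeriv_succ]
  exact ((ContDiff.differentiable_iteratedDeriv (n := ⊤) k (by fun_prop)
    (WithTop.coe_lt_top _)) s).hasDerivAt

theorem Nat.choose_mul_descFactorial_le (m j k : ℕ) :
    m.choose k * j.descFactorial k ≤ m ^ k * j.choose k := by
  rw [Nat.descFactorial_eq_factorial_mul_choose, ← mul_assoc, mul_comm (m.choose k),
    ← Nat.descFactorial_eq_factorial_mul_choose]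
  exact Nat.mul_le_mul_right _ (Nat.descFactorial_le_pow m k)

theorem sum_range_pow_mul_pow_mul_choose_le {x y : ℝ} (hx : 0 ≤ x) (hy : 0 ≤ y) (n j : ℕ) :
    ∑ k ∈ Finset.range n, x ^ k * y ^ (j - k) * j.choose k ≤ (x + y) ^ j := by
  rw [add_pow]
  calc ∑ k ∈ Finset.range n, x ^ k * y ^ (j - k) * j.choose k
      ≤ ∑ k ∈ Finset.range (max n (j + 1)), x ^ k * y ^ (j - k) * j.choose k :=
        Finset.sum_le_sum_of_subset_of_nonneg (Finset.range_subset_range.2 (le_max_left _ _))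
          fun _ _ _ => by positivity
    _ = ∑ k ∈ Finset.range (j + 1), x ^ k * y ^ (j - k) * j.choose k := by
        refine (Finset.sum_subset (Finset.range_subset_range.2 (le_max_right _ _))
          fun k _ hk => ?_).symm
        rw [Nat.choose_eq_zero_of_lt (by simpa using hk), Nat.cast_zero, mul_zero]

theorem sum_choose_mul_descFactorial_mul_pow_le {N m : ℕ} {t : ℝ} (ht : 0 ≤ t) (hN : 1 ≤ N)
    (hm : m ≤ N) (j : ℕ) :
    ∑ k ∈ Finset.range (m + 1), ((m.choose k * j.descFactorial k : ℕ) : ℝ) * t ^ (j - k) ≤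
      (N * (1 + t)) ^ j :=
  calc ∑ k ∈ Finset.range (m + 1), ((m.choose k * j.descFactorial k : ℕ) : ℝ) * t ^ (j - k)
      ≤ ∑ k ∈ Finset.range (m + 1), (N : ℝ) ^ k * t ^ (j - k) * j.choose k := by
        refine Finset.sum_le_sum fun k _ => ?_
        rw [mul_right_comm]
        refine mul_le_mul_of_nonneg_right ?_ (pow_nonneg ht _)
        exact_mod_cast (Nat.choose_mul_descFactorial_le m j k).trans
          (Nat.mul_le_mul_right _ (Nat.pow_le_pow_left hm k))
    _ ≤ (N + t) ^ j := sum_range_pow_mul_pow_mul_choose_le (Nat.cast_nonneg N) ht _ j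
    _ ≤ (N * (1 + t)) ^ j := by
        gcongr
        nlinarith [(Nat.one_le_cast (α := ℝ)).2 hN]

/-- The `m`-th `s`-derivative, for `s < t`, of the term `(-s)^j / j! · M^{*j}(t - s)` of
`K_M(t, s)`, written out by the Leibniz rule. -/
noncomputable def kernelTermDeriv (M : ℝ → ℝ) (t : ℝ) (j m : ℕ) (s : ℝ) : ℝ :=
  ∑ k ∈ Finset.range (m + 1), (m.choose k : ℝ) *
    (iteratedDeriv k (fun s : ℝ => (-s) ^ j / j.factorial) s *
      ((-1) ^ (m - k) * convPowDeriv M j (m - k) (t - s)))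

section KernelTerms

variable {M : ℝ → ℝ} {t : ℝ}

theorem kernelTermDeriv_zero_right (M : ℝ → ℝ) (t : ℝ) (j : ℕ) (s : ℝ) :
    kernelTermDeriv M t j 0 s = (-s) ^ j / j.factorial * convPow M j (t - s) := by
  simp [kernelTermDeriv, convPowDeriv_zero_right]

theorem kernelTermDeriv_zero_left (M : ℝ → ℝ) (t : ℝ) (m : ℕ) (s : ℝ) :
    kernelTermDeriv M t 0 m s = 0 := by
  simp [kernelTermDeriv, convPowDeriv]

theorem hasDerivAt_kernelTermDeriv (hM : ContDiffOn ℝ (⊤ : ℕ∞) M (Ici 0)) (j m : ℕ) {s : ℝ}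
    (hs : s < t) : HasDerivAt (kernelTermDeriv M t j m) (kernelTermDeriv M t j (m + 1) s) s := by
  have hQ : ∀ l, HasDerivAt (fun s => (-1) ^ l * convPowDeriv M j l (t - s))
      ((-1) ^ (l + 1) * convPowDeriv M j (l + 1) (t - s)) s := fun l => by
    have h := ((hasDerivAt_convPowDeriv hM j l (t - s) (sub_pos.2 hs)).comp s
      ((hasDerivAt_id' s).const_sub t)).const_mul ((-1 : ℝ) ^ l)
    exact h.congr_deriv (by rw [pow_succ]; ring)
  have hsum := HasDerivAt.fun_sum (u := Finset.range (m + 1)) fun k _ =>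
    ((hasDerivAt_iteratedDeriv_neg_pow_div_factorial j k s).fun_mul (hQ (m - k))).const_mul
      (m.choose k : ℝ)
  refine hsum.congr_deriv ?_
  have h := Finset.sum_choose_succ_mul (fun k l =>
    iteratedDeriv k (fun s : ℝ => (-s) ^ j / j.factorial) s *
      ((-1) ^ l * convPowDeriv M j l (t - s))) m
  rw [kernelTermDeriv, h, ← Finset.sum_add_distrib]
  refine Finset.sum_congr rfl fun k hk => ?_
  rw [show m - k + 1 = m + 1 - k by have := Finset.mem_range.1 hk; omega, mul_add, add_comm]

theorem abs_kernelTermDeriv_le {S : ℕ → ℝ} {N j m : ℕ} {s : ℝ} (ht : 0 ≤ t) (hN : 1 ≤ N)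
    (hS : ∀ l, ∀ x ∈ Icc 0 t, |iteratedDerivWithin l M (Ici 0) x| ≤ S l) (hm : m ≤ N)
    (hs : s ∈ Icc 0 t) :
    |kernelTermDeriv M t j m s| ≤
      Real.exp t * (N * (1 + t) * ∑ i ∈ Finset.range (N + 1), S i) ^ j / j.factorial := by
  set A := ∑ i ∈ Finset.range (N + 1), S i
  have hS0 : ∀ i, 0 ≤ S i := fun i => (abs_nonneg _).trans (hS i 0 ⟨le_rfl, ht⟩)
  have hts : t - s ∈ Icc 0 t := ⟨by linarith [hs.2], by linarith [hs.1]⟩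
  have hA : 0 ≤ A := Finset.sum_nonneg fun i _ => hS0 i
  set c := A ^ j * Real.exp t / j.factorial
  have hc : 0 ≤ c := by positivity
  have hterm : ∀ k ∈ Finset.range (m + 1),
      |(m.choose k : ℝ) * (iteratedDeriv k (fun s : ℝ => (-s) ^ j / j.factorial) s *
        ((-1) ^ (m - k) * convPowDeriv M j (m - k) (t - s)))| ≤
      ((m.choose k * j.descFactorial k : ℕ) : ℝ) * t ^ (j - k) * c := by
    intro k hk
    have hconv : |convPowDeriv M j (m - k) (t - s)| ≤ A ^ j * Real.exp t := by
      refine (abs_convPowDeriv_le ht hS j (m - k) _ hts).trans ?_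
      gcongr
      · exact Finset.sum_nonneg fun i _ => hS0 i
      · exact Finset.sum_le_sum_of_subset_of_nonneg (Finset.range_subset_range.2 (by omega))
          fun i _ _ => hS0 i
    rw [abs_mul, abs_mul, abs_mul, abs_pow, abs_neg, abs_one, one_pow, one_mul, Nat.abs_cast,
      abs_iteratedDeriv_neg_pow_div_factorial, abs_of_nonneg hs.1]
    calc (m.choose k : ℝ) * (j.descFactorial k * s ^ (j - k) / j.factorial *
          |convPowDeriv M j (m - k) (t - s)|)
        ≤ (m.choose k : ℝ) * (j.descFactorial k * t ^ (j - k) / j.factorial *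
          (A ^ j * Real.exp t)) := by
          gcongr
          exacts [hs.1, hs.2]
      _ = _ := by push_cast; ring
  calc |kernelTermDeriv M t j m s|
      ≤ ∑ k ∈ Finset.range (m + 1), ((m.choose k * j.descFactorial k : ℕ) : ℝ) * t ^ (j - k) * c :=
        (Finset.abs_sum_le_sum_abs _ _).trans (Finset.sum_le_sum hterm)
    _ = (∑ k ∈ Finset.range (m + 1), ((m.choose k * j.descFactorial k : ℕ) : ℝ) * t ^ (j - k)) *
          c := by rw [Finset.sum_mul]
    _ ≤ (N * (1 + t)) ^ j * c := by
        gcongr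
        exact sum_choose_mul_descFactorial_mul_pow_le ht hN hm j
    _ = Real.exp t * (N * (1 + t) * A) ^ j / j.factorial := by
        simp only [c, mul_pow]
        ring

end KernelTerms

theorem hasSum_pow_succ_div_factorial (x : ℝ) :
    HasSum (fun n : ℕ => x ^ (n + 1) / (n + 1).factorial) (Real.exp x - 1) := by
  have h := NormedSpace.expSeries_div_hasSum_exp x
  rw [← Real.exp_eq_exp_ℝ] at h
  simpa using (hasSum_nat_add_iff' 1).2 h

/-- `kernelDeriv M t m` is `∂_s^m K_M(t, ·)` on `(0, t)`, differentiated term by term. -/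
noncomputable def kernelDeriv (M : ℝ → ℝ) (t : ℝ) (m : ℕ) (s : ℝ) : ℝ :=
  ∑' j, kernelTermDeriv M t j m s

section Kernel

variable {M : ℝ → ℝ} {t : ℝ} {S : ℕ → ℝ} {N : ℕ}

theorem KM_eq_kernelDeriv_zero (M : ℝ → ℝ) (t : ℝ) : KM M t = kernelDeriv M t 0 :=
  funext fun s => tsum_congr fun j => (kernelTermDeriv_zero_right M t j s).symm

theorem summable_exp_mul_pow_div_factorial (t x : ℝ) :
    Summable fun j : ℕ => Real.exp t * x ^ j / j.factorial := by
  simpa only [mul_div_assoc] using (Real.summable_pow_div_factorial x).mul_left (Real.exp t)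

theorem hasDerivAt_kernelDeriv (hM : ContDiffOn ℝ (⊤ : ℕ∞) M (Ici 0)) (ht : 0 ≤ t)
    (hN : 1 ≤ N) (hS : ∀ l, ∀ x ∈ Icc 0 t, |iteratedDerivWithin l M (Ici 0) x| ≤ S l)
    {m : ℕ} (hm : m < N) {s : ℝ} (hs : s ∈ Ioo 0 t) :
    HasDerivAt (kernelDeriv M t m) (kernelDeriv M t (m + 1) s) s :=
  hasDerivAt_tsum_of_isPreconnected (summable_exp_mul_pow_div_factorial t _) isOpen_Ioo
    isPreconnected_Ioo (fun j _ hy => hasDerivAt_kernelTermDeriv hM j m hy.2)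
    (fun _ _ hy => abs_kernelTermDeriv_le ht hN hS hm (Ioo_subset_Icc_self hy)) hs
    ((summable_exp_mul_pow_div_factorial t _).of_norm_bounded fun _ =>
      abs_kernelTermDeriv_le ht hN hS hm.le (Ioo_subset_Icc_self hs)) hs

theorem abs_kernelDeriv_le (ht : 0 ≤ t) (hN : 1 ≤ N)
    (hS : ∀ l, ∀ x ∈ Icc 0 t, |iteratedDerivWithin l M (Ici 0) x| ≤ S l) {s : ℝ}
    (hs : s ∈ Icc 0 t) :
    |kernelDeriv M t N s| ≤
      Real.exp t * (Real.exp (N * (1 + t) * ∑ i ∈ Finset.range (N + 1), S i) - 1) := by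
  have hsum : Summable fun j => kernelTermDeriv M t j N s :=
    (summable_exp_mul_pow_div_factorial t _).of_norm_bounded fun _ =>
      abs_kernelTermDeriv_le ht hN hS le_rfl hs
  rw [kernelDeriv, hsum.tsum_eq_zero_add, kernelTermDeriv_zero_left, zero_add]
  refine tsum_of_norm_bounded (f := fun j => kernelTermDeriv M t (j + 1) N s)
    ((hasSum_pow_succ_div_factorial _).mul_left (Real.exp t)) fun j => ?_
  rw [← mul_div_assoc]
  exact abs_kernelTermDeriv_le ht hN hS le_rfl hs

end Kernel

theorem iteratedDerivWithin_eqOn_of_hasDerivAt {𝕜 E : Type*} [NontriviallyNormedField 𝕜]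
    [NormedAddCommGroup E] [NormedSpace 𝕜 E] {f : 𝕜 → E} {F : ℕ → 𝕜 → E} {s U : Set 𝕜}
    (hU : IsOpen U) (hUs : U ⊆ s) (hf : EqOn f (F 0) U) :
    ∀ n, (∀ m < n, ∀ x ∈ U, HasDerivAt (F m) (F (m + 1) x) x) →
      EqOn (iteratedDerivWithin n f s) (F n) U
  | 0, _ => by simpa using hf
  | n + 1, hF => fun x hx => by
    have hn : iteratedDerivWithin n f s =ᶠ[𝓝 x] F n :=
      Filter.mem_of_superset (hU.mem_nhds hx) fun y hy =>
        iteratedDerivWithin_eqOn_of_hasDerivAt hU hUs hf n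
          (fun m hm => hF m (Nat.lt_succ_of_lt hm)) hy
    rw [iteratedDerivWithin_succ, derivWithin_of_mem_nhds (Filter.mem_of_superset
      (hU.mem_nhds hx) hUs), hn.deriv_eq]
    exact (hF n n.lt_succ_self x hx).deriv

theorem ContinuousOn.abs_le_ciSup_Icc {f : ℝ → ℝ} {a b x : ℝ} (hf : ContinuousOn f (Icc a b))
    (hx : x ∈ Icc a b) : |f x| ≤ ⨆ y : Icc a b, |f y| := by
  obtain ⟨C, hC⟩ := isCompact_Icc.exists_bound_of_continuousOn hf
  exact le_ciSup ⟨C, by rintro _ ⟨y, rfl⟩; exact hC y y.2⟩ (⟨x, hx⟩ : Icc a b)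

theorem abs_integral_mul_exp_neg_mul_le {g : ℝ → ℝ} {τ t B : ℝ} (hτ : 0 ≤ τ) (ht : 0 ≤ t)
    (hB : 0 ≤ B) (hg : ∀ s ∈ Ioo 0 t, |g s| ≤ B) :
    |∫ s in (0:ℝ)..t, τ * Real.exp (-τ * s) * g s| ≤ B := by
  have hprim : ∀ s ∈ uIcc 0 t, HasDerivAt (fun s => -Real.exp (-τ * s) * B)
      (τ * Real.exp (-τ * s) * B) s := fun s _ => by
    have h := (((hasDerivAt_id' s).const_mul (-τ)).exp.neg).mul_const B
    exact h.congr_deriv (by ring)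
  have hint : IntervalIntegrable (fun s => τ * Real.exp (-τ * s) * B) volume 0 t :=
    (by fun_prop : Continuous fun s => τ * Real.exp (-τ * s) * B).intervalIntegrable 0 t
  calc |∫ s in (0:ℝ)..t, τ * Real.exp (-τ * s) * g s|
      ≤ ∫ s in (0:ℝ)..t, τ * Real.exp (-τ * s) * B := by
        refine intervalIntegral.norm_integral_le_of_norm_le
          (f := fun s => τ * Real.exp (-τ * s) * g s) ht ?_ hint
        filter_upwards [Measure.ae_ne volume t] with s hst hs
        rw [Real.norm_eq_abs, abs_mul, abs_of_nonneg (by positivity)]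
        exact mul_le_mul_of_nonneg_left (hg s ⟨hs.1, lt_of_le_of_ne hs.2 hst⟩) (by positivity)
    _ = B * (1 - Real.exp (-τ * t)) := by
        rw [intervalIntegral.integral_eq_sub_of_hasDerivAt hprim hint]
        simp only [mul_zero, Real.exp_zero]
        ring
    _ ≤ B := mul_le_of_le_one_right hB (sub_le_self _ (Real.exp_pos _).le)

/-- bound on the remainder.  For `M ∈ C^∞([0,∞))`, `N ≥ 2`, `t ≥ 0`
and `τ > 0`:
`|R_N(t,τ)| ≤ e^t (exp(N(1+t) ∑_{j=0}^N max_{[0,t]} |M^{(j)}|) − 1)`. -/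
theorem RNrem_bound
    (M : ℝ → ℝ) (hM : ContDiffOn ℝ (⊤ : ℕ∞) M (Set.Ici 0))
    (N : ℕ) (hN : 2 ≤ N) :
    ∀ t : ℝ, 0 ≤ t → ∀ τ : ℝ, 0 < τ →
      |RNrem M N t τ| ≤
        Real.exp t *
          (Real.exp ((N : ℝ) * (1 + t) *
              ∑ j ∈ Finset.range (N + 1),
                ⨆ s : Set.Icc (0:ℝ) t, |iteratedDerivWithin j M (Set.Ici 0) s|) - 1) := by
  intro t ht τ hτ
  have hN₁ : 1 ≤ N := by omega
  set S : ℕ → ℝ := fun l => ⨆ s : Icc (0:ℝ) t, |iteratedDerivWithin l M (Ici 0) s|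
  have hS : ∀ l, ∀ x ∈ Icc 0 t, |iteratedDerivWithin l M (Ici 0) x| ≤ S l := fun l x hx =>
    ((hM.continuousOn_iteratedDerivWithin (by exact_mod_cast le_top) (uniqueDiffOn_Ici 0)).mono
      Icc_subset_Ici_self).abs_le_ciSup_Icc hx
  have hkernel : EqOn (iteratedDerivWithin N (fun s' => KM M t s') (Iic t)) (kernelDeriv M t N)
      (Ioo 0 t) :=
    iteratedDerivWithin_eqOn_of_hasDerivAt isOpen_Ioo
      (Ioo_subset_Iio_self.trans Iio_subset_Iic_self)
      (fun s _ => congrFun (KM_eq_kernelDeriv_zero M t) s) N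
      fun m hm s hs => hasDerivAt_kernelDeriv hM ht hN₁ hS hm hs
  have hX : 0 ≤ (N : ℝ) * (1 + t) * ∑ i ∈ Finset.range (N + 1), S i := by
    have := Finset.sum_nonneg fun i (_ : i ∈ Finset.range (N + 1)) =>
      (abs_nonneg _).trans (hS i 0 ⟨le_rfl, ht⟩)
    positivity
  refine abs_integral_mul_exp_neg_mul_le hτ.le ht
    (mul_nonneg (Real.exp_pos t).le (sub_nonneg.2 (Real.one_le_exp hX))) fun s hs => ?_
  rw [hkernel hs]
  exact abs_kernelDeriv_le ht hN₁ hS (Ioo_subset_Icc_self hs)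
end
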